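/- arXiv:math/0503660 — 4 statements merged into one kernel-verified Lean document; each statement's English description precedes it below -/
import Mathlib

section
/- Let h : E^d → ℝ be nonnegative. Then the following are equivalent: (i) (1/γ_n) · max{ h(X_i) : i ≤ n, i ∈ S_θ^d, all coordinates of i distinct } → 0 almost surely as n → ∞ in the sector S_θ^d; (ii) (1/γ_(n,…,n)) · max{ h(X_i) : i ≤ (n,…,n), all coordinates of i distinct } → 0 almost surely as n → ∞ in ℤ_+. -/
open MeasureTheory ProbabilityTheory Filter Finset
open scoped Topology ENNReal

noncomputable section

/-- The sector `S_θ^d ⊆ ℤ_+^d` (positive integers modelled by `ℕ+`). -/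
def sector (d : ℕ) (θ : ℝ) : Set (Fin d → ℕ+) :=
  {i | ∀ l k : Fin d, θ < (i l : ℝ) / (i k : ℝ) ∧ (i l : ℝ) / (i k : ℝ) < 1 / θ}

/-- The filter of `n → ∞` within the sector: every coordinate tends to infinity
(equivalently `min_j n_j → ∞`) and `n` ranges in the sector. -/
def sectorFilter (d : ℕ) (θ : ℝ) : Filter (Fin d → ℕ+) :=
  atTop ⊓ Filter.principal (sector d θ)

/-- The diagonal multi-index `(m, …, m)`. -/
def diag (d : ℕ) (m : ℕ+) : Fin d → ℕ+ := fun _ => m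

open scoped Classical in
/-- Multi-indices `i ≤ n` lying in the sector, with pairwise distinct coordinates. -/
def secIdx (d : ℕ) (θ : ℝ) (n : Fin d → ℕ+) : Finset (Fin d → ℕ+) :=
  (Finset.Icc 1 n).filter fun i => i ∈ sector d θ ∧ Function.Injective i

open scoped Classical in
/-- Multi-indices `i ≤ n` lying in the sector (coordinates may coincide). -/
def secIdxAll (d : ℕ) (θ : ℝ) (n : Fin d → ℕ+) : Finset (Fin d → ℕ+) :=
  (Finset.Icc 1 n).filter fun i => i ∈ sector d θ

open scoped Classical in
/-- Multi-indices `i ≤ n` with pairwise distinct coordinates. -/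
def cubeIdx (d : ℕ) (n : Fin d → ℕ+) : Finset (Fin d → ℕ+) :=
  (Finset.Icc 1 n).filter fun i => Function.Injective i

/-- All multi-indices `i ≤ n`. -/
def cubeIdxAll (d : ℕ) (n : Fin d → ℕ+) : Finset (Fin d → ℕ+) := Finset.Icc 1 n

open scoped Classical in
/-- The block `{i : θ·m < i_l ≤ m for all l}`, with pairwise distinct coordinates. -/
def blockIdx (d : ℕ) (θ : ℝ) (m : ℕ+) : Finset (Fin d → ℕ+) :=
  (Finset.Icc 1 (diag d m)).filter fun i =>
    (∀ l, θ * (m : ℝ) < (i l : ℝ)) ∧ Function.Injective i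

open scoped Classical in
/-- The cube `{i : i_l ≤ (1-θ)·m for all l}`, with pairwise distinct coordinates. -/
def smallCube (d : ℕ) (θ : ℝ) (m : ℕ+) : Finset (Fin d → ℕ+) :=
  (Finset.Icc 1 (diag d m)).filter fun i =>
    (∀ l, (i l : ℝ) ≤ (1 - θ) * (m : ℝ)) ∧ Function.Injective i

/-- Maximum of `f` over a finite index set (`0` for the empty set; used for nonnegative `f`). -/
def finMax {ι : Type*} (s : Finset ι) (f : ι → ℝ) : ℝ := s.fold max 0 f




theorem finMax_nonneg {ι : Type*} (s : Finset ι) (f : ι → ℝ) : 0 ≤ finMax s f := by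
  classical
  induction s using Finset.cons_induction with
  | empty => simp [finMax]
  | cons a s ha ih =>
      rw [finMax, Finset.fold_cons]
      exact le_max_of_le_right ih

theorem le_finMax {ι : Type*} {s : Finset ι} {f : ι → ℝ} {i : ι} (hi : i ∈ s) :
    f i ≤ finMax s f := by
  classical
  induction s using Finset.cons_induction with
  | empty => simp at hi
  | cons a s ha ih =>
      rw [finMax, Finset.fold_cons]
      rcases Finset.mem_cons.1 hi with rfl | hi
      · exact le_max_left _ _
      · exact le_max_of_le_right (ih hi)

theorem finMax_le {ι : Type*} {s : Finset ι} {f : ι → ℝ} {c : ℝ} (h0 : 0 ≤ c)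
    (H : ∀ i ∈ s, f i ≤ c) : finMax s f ≤ c := by
  classical
  induction s using Finset.cons_induction with
  | empty => simpa [finMax] using h0
  | cons a s ha ih =>
      rw [finMax, Finset.fold_cons]
      exact max_le (H a (Finset.mem_cons_self a s))
        (ih fun i hi => H i (Finset.mem_cons.2 (Or.inr hi)))

theorem finMax_le_finMax {ι κ : Type*} {s : Finset ι} {t : Finset κ} {f : ι → ℝ} {g : κ → ℝ}
    (H : ∀ i ∈ s, ∃ j ∈ t, f i ≤ g j) : finMax s f ≤ finMax t g :=
  finMax_le (finMax_nonneg t g) fun i hi => by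
    obtain ⟨j, hj, hij⟩ := H i hi
    exact hij.trans (le_finMax hj)

theorem finMax_congr {ι : Type*} {s : Finset ι} {f g : ι → ℝ}
    (H : ∀ i ∈ s, f i = g i) : finMax s f = finMax s g :=
  Finset.fold_congr H

theorem measurable_finMax {ι Ω : Type*} [MeasurableSpace Ω] {F : ι → Ω → ℝ}
    (s : Finset ι) (hF : ∀ i, Measurable (F i)) :
    Measurable fun ω => finMax s (fun i => F i ω) := by
  classical
  induction s using Finset.cons_induction with
  | empty => simpa [finMax] using measurable_const
  | cons a s ha ih =>
      simp only [finMax, Finset.fold_cons]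
      exact (hF a).max ih


theorem map_restrict_eq_pi {E Ω : Type*} [MeasurableSpace E] [MeasurableSpace Ω]
    (μ : Measure Ω) [IsProbabilityMeasure μ] (X : ℕ+ → Ω → E) (hXm : ∀ i, Measurable (X i))
    (hXind : iIndepFun X μ)
    (hXid : ∀ i j : ℕ+, IdentDistrib (X i) (X j) μ μ)
    {ι : Type*} [Fintype ι] (g : ι → ℕ+) (hg : Function.Injective g) :
    Measure.map (fun ω (j : ι) => X (g j) ω) μ
      = Measure.pi (fun _ : ι => Measure.map (X 1) μ) := by
  classical
  haveI : IsProbabilityMeasure (Measure.map (X 1) μ) :=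
    Measure.isProbabilityMeasure_map (hXm 1).aemeasurable
  refine (Measure.pi_eq fun s hs => ?_).symm
  rw [Measure.map_apply (measurable_pi_lambda _ fun j => hXm (g j)) (MeasurableSet.univ_pi hs)]
  set sets : ℕ+ → Set E := fun i => if hi : ∃ j, g j = i then s hi.choose else Set.univ with hsets
  have hset : ∀ j : ι, sets (g j) = s j := by
    intro j
    have hi : ∃ j', g j' = g j := ⟨j, rfl⟩
    simp only [hsets, dif_pos hi]
    exact congrArg s (hg hi.choose_spec)
  have hpre : (fun ω (j : ι) => X (g j) ω) ⁻¹' Set.pi Set.univ s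
      = ⋂ i ∈ Finset.univ.image g, X i ⁻¹' sets i := by
    ext ω
    simp only [Set.mem_preimage, Set.mem_pi, Set.mem_univ, true_implies, Set.mem_iInter,
      Finset.mem_image, Finset.mem_univ, true_and]
    constructor
    · rintro H i ⟨j, rfl⟩
      rw [hset]; exact H j
    · intro H j
      have := H (g j) ⟨j, rfl⟩
      rwa [hset] at this
  rw [hpre, hXind.measure_inter_preimage_eq_mul _ (fun i _ => ?_)]
  · rw [Finset.prod_image (fun a _ b _ hab => hg hab)]
    refine Finset.prod_congr rfl fun j _ => ?_
    rw [hset, (hXid (g j) 1).measure_mem_eq (hs j), Measure.map_apply (hXm 1) (hs j)]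
  · by_cases hi : ∃ j, g j = i
    · simp only [hsets, dif_pos hi]; exact hs _
    · simp only [hsets, dif_neg hi]; exact MeasurableSet.univ


theorem meas_biInter_blocks {E Ω : Type*} [MeasurableSpace E] [MeasurableSpace Ω]
    (μ : Measure Ω) [IsProbabilityMeasure μ] (X : ℕ+ → Ω → E) (hXm : ∀ i, Measurable (X i))
    (hXind : iIndepFun X μ)
    (I : ℕ → Finset ℕ+) (hI : ∀ s t, s ≠ t → Disjoint (I s) (I t))
    (M : ∀ s : ℕ, Set ({x // x ∈ I s} → E)) (hM : ∀ s, MeasurableSet (M s))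
    (S : Finset ℕ) :
    μ (⋂ s ∈ S, (fun ω (j : {x // x ∈ I s}) => X j.1 ω) ⁻¹' M s)
      = ∏ s ∈ S, μ ((fun ω (j : {x // x ∈ I s}) => X j.1 ω) ⁻¹' M s) := by
  classical
  induction S using Finset.induction_on with
  | empty => simp
  | @insert t S htS ih =>
      set U : Finset ℕ+ := S.biUnion I with hU
      have hdisj : Disjoint (I t) U := by
        rw [hU, Finset.disjoint_biUnion_right]
        intro s hs
        exact hI t s (fun hts => htS (hts ▸ hs))
      have hF : IndepFun (fun ω (j : {x // x ∈ I t}) => X j.1 ω)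
          (fun ω (j : {x // x ∈ U}) => X j.1 ω) μ :=
        hXind.indepFun_finset (I t) U hdisj hXm
      -- for each s ∈ S, rewrite the event as a preimage under the U-tuple
      have key : ∀ s ∈ S, ∃ Ns : Set ({x // x ∈ U} → E), MeasurableSet Ns ∧
          (fun ω (j : {x // x ∈ I s}) => X j.1 ω) ⁻¹' M s
            = (fun ω (j : {x // x ∈ U}) => X j.1 ω) ⁻¹' Ns := by
        intro s hs
        have hsub : ∀ j : {x // x ∈ I s}, j.1 ∈ U := fun j =>
          Finset.mem_biUnion.2 ⟨s, hs, j.2⟩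
        refine ⟨(fun (v : {x // x ∈ U} → E) (j : {x // x ∈ I s}) => v ⟨j.1, hsub j⟩) ⁻¹' M s,
          ?_, rfl⟩
        exact (measurable_pi_lambda _ fun j => measurable_pi_apply _) (hM s)
      set Ns : ℕ → Set ({x // x ∈ U} → E) := fun s =>
        if hs : s ∈ S then (key s hs).choose else Set.univ with hNs
      have hNsm : ∀ s ∈ S, MeasurableSet (Ns s) := fun s hs => by
        simp only [hNs, dif_pos hs]; exact (key s hs).choose_spec.1
      have hNse : ∀ s ∈ S, (fun ω (j : {x // x ∈ I s}) => X j.1 ω) ⁻¹' M s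
          = (fun ω (j : {x // x ∈ U}) => X j.1 ω) ⁻¹' Ns s := fun s hs => by
        simp only [hNs, dif_pos hs]; exact (key s hs).choose_spec.2
      have hinter : (⋂ s ∈ S, (fun ω (j : {x // x ∈ I s}) => X j.1 ω) ⁻¹' M s)
          = (fun ω (j : {x // x ∈ U}) => X j.1 ω) ⁻¹' (⋂ s ∈ S, Ns s) := by
        rw [Set.preimage_iInter₂]
        exact Set.iInter₂_congr hNse
      rw [Finset.set_biInter_insert, Finset.prod_insert htS, hinter,
        hF.measure_inter_preimage_eq_mul _ _ (hM t)
          (S.measurableSet_biInter hNsm),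
        ← hinter, ih]

theorem gamma_two_pow_mul {d : ℕ} (γ : (Fin d → ℕ+) → ℝ) (C : ℝ) (hC0 : 0 ≤ C)
    (hγdbl : ∀ n, γ (fun j => 2 * n j) ≤ C * γ n) :
    ∀ (k : ℕ) (n : Fin d → ℕ+), γ (fun j => 2 ^ k * n j) ≤ C ^ k * γ n := by
  intro k
  induction k with
  | zero => intro n; simp
  | succ k ih =>
      intro n
      have he : (fun j => 2 ^ (k + 1) * n j) = fun j => 2 * (2 ^ k * n j) := by
        funext j
        rw [pow_succ', mul_assoc]
      rw [he]
      calc γ (fun j => 2 * (2 ^ k * n j)) ≤ C * γ (fun j => 2 ^ k * n j) := hγdbl _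
        _ ≤ C * (C ^ k * γ n) := mul_le_mul_of_nonneg_left (ih n) hC0
        _ = C ^ (k + 1) * γ n := by ring

/-- **Theorem 2.1.** For nonnegative `h`, a.s. convergence to `0` of the normalized maxima
`γ_n⁻¹ maxᶿ_{i ≤ n} h(X_i)` along the sector is equivalent to a.s. convergence to `0` of
`γ_{(n,…,n)}⁻¹ max_{i ≤ (n,…,n)} h(X_i)` along the diagonal. -/
theorem sectorial_max_equiv_diagonal_max
    {E Ω : Type*} [MeasurableSpace E] [MeasurableSpace Ω]
    (μ : Measure Ω) [IsProbabilityMeasure μ]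
    (d : ℕ) (hd : 1 ≤ d) (θ : ℝ) (hθ0 : 0 < θ) (hθ1 : θ < 1)
    (X : ℕ+ → Ω → E) (hXm : ∀ i, Measurable (X i))
    (hXind : iIndepFun X μ)
    (hXid : ∀ i j : ℕ+, IdentDistrib (X i) (X j) μ μ)
    (h : (Fin d → E) → ℝ) (hhm : Measurable h)
    (hsym : ∀ (σ : Equiv.Perm (Fin d)) (x : Fin d → E), h (x ∘ σ) = h x)
    (hh0 : ∀ x, 0 ≤ h x)
    (γ : (Fin d → ℕ+) → ℝ) (hγpos : ∀ n, 0 < γ n) (hγmono : Monotone γ)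
    (C : ℝ) (hC : 0 < C) (hγdbl : ∀ n, γ (fun j => 2 * n j) ≤ C * γ n)
    (hγ3 : ∀ l : ℕ, 1 ≤ l →
      (∑' k : ℕ, (2 : ℝ) ^ (d * (l + k)) / (γ (diag d (2 ^ (l + k)))) ^ 2)
        ≤ C * (2 : ℝ) ^ (d * l) / (γ (diag d (2 ^ l))) ^ 2) :
    (∀ᵐ ω ∂μ, Tendsto
        (fun n => finMax (secIdx d θ n) (fun i => h fun l => X (i l) ω) / γ n)
        (sectorFilter d θ) (𝓝 0))
      ↔ (∀ᵐ ω ∂μ, Tendsto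
        (fun m : ℕ+ =>
          finMax (cubeIdx d (diag d m)) (fun i => h fun l => X (i l) ω) / γ (diag d m))
        atTop (𝓝 0)) := by
  constructor
  · intro h1
    classical
    have hdpos : 0 < d := hd
    have hΩne : Nonempty Ω := by
      have h0 : μ Set.univ ≠ 0 := by simp
      exact ⟨(nonempty_of_measure_ne_zero h0).some⟩
    have hEne : Nonempty E := ⟨X 1 hΩne.some⟩
    -- constants
    set Aθ : ℕ := ⌈θ / (1 - θ)⌉₊ + 1 with hAθdef
    have hAθpos : 0 < Aθ := Nat.succ_pos _
    have h1θ : (0 : ℝ) < 1 - θ := by linarith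
    have hAθgt : θ / (1 - θ) < (Aθ : ℝ) := by
      have h0 := Nat.le_ceil (θ / (1 - θ))
      have h2 : ((⌈θ / (1 - θ)⌉₊ : ℕ) : ℝ) < (Aθ : ℝ) := by
        rw [hAθdef]; push_cast; linarith
      linarith
    have hθA : θ * ((Aθ : ℝ) + 1) < (Aθ : ℝ) := by
      rw [div_lt_iff₀ h1θ] at hAθgt
      nlinarith
    set K' : ℕ := Aθ + 1 with hK'def
    have h2K : Aθ + 1 ≤ 2 ^ K' := (Nat.lt_two_pow_self (n := K')).le
    set AP : ℕ+ := Aθ.toPNat' with hAPdef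
    have hAP : (AP : ℕ) = Aθ := PNat.toPNat'_coe hAθpos
    -- the shift embeddings
    set emb : ℕ → ℕ+ → ℕ+ := fun s j => AP * 2 ^ s + j with hembdef
    have hembinj : ∀ s, Function.Injective (emb s) := by
      intro s a b hab
      have hc : ((AP * 2 ^ s : ℕ+) : ℕ) + (a : ℕ) = ((AP * 2 ^ s : ℕ+) : ℕ) + (b : ℕ) := by
        have := congrArg (fun x : ℕ+ => (x : ℕ)) hab
        simpa [hembdef, PNat.add_coe] using this
      exact PNat.coe_inj.1 (Nat.add_left_cancel hc)
    -- the blocks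
    set Is : ℕ → Finset ℕ+ := fun s => Finset.Icc (AP * 2 ^ s + 1) (AP * 2 ^ s + 2 ^ s)
      with hIsdef
    have hIsbound : ∀ (s : ℕ) (x : ℕ+), x ∈ Is s →
        Aθ * 2 ^ s < (x : ℕ) ∧ (x : ℕ) ≤ (Aθ + 1) * 2 ^ s := by
      intro s x hx
      rw [hIsdef, Finset.mem_Icc] at hx
      have h1' := (PNat.coe_le_coe _ _).2 hx.1
      have h2' := (PNat.coe_le_coe _ _).2 hx.2
      have h2c : ((2 : ℕ+) : ℕ) = 2 := rfl
      simp only [PNat.add_coe, PNat.mul_coe, PNat.pow_coe, PNat.one_coe, hAP, h2c] at h1' h2'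
      constructor
      · omega
      · have : (Aθ + 1) * 2 ^ s = Aθ * 2 ^ s + 2 ^ s := by ring
        omega
    have hIsdisj : ∀ s t : ℕ, s ≠ t → Disjoint (Is s) (Is t) := by
      have hlt : ∀ s t : ℕ, s < t → Disjoint (Is s) (Is t) := by
        intro s t hst
        rw [Finset.disjoint_left]
        intro x hxs hxt
        have hb1 := (hIsbound s x hxs).2
        have hb2 := (hIsbound t x hxt).1
        have hmono : (Aθ + 1) * 2 ^ s ≤ Aθ * 2 ^ t := by
          calc (Aθ + 1) * 2 ^ s ≤ (Aθ + Aθ) * 2 ^ s := by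
                have : 1 ≤ Aθ := hAθpos
                exact Nat.mul_le_mul_right _ (by omega)
            _ = Aθ * 2 ^ (s + 1) := by ring
            _ ≤ Aθ * 2 ^ t := Nat.mul_le_mul_left _ (Nat.pow_le_pow_right (by norm_num) hst)
        omega
      intro s t hst
      rcases lt_or_gt_of_ne hst with h | h
      · exact hlt s t h
      · exact (hlt t s h).symm
    -- membership of shifted indices in the blocks
    have hYmem : ∀ (s : ℕ) (j : ℕ+), j ∈ Finset.Icc 1 ((2 : ℕ+) ^ s) → emb s j ∈ Is s := by
      intro s j hj
      rw [Finset.mem_Icc] at hj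
      rw [hIsdef, Finset.mem_Icc]
      constructor
      · exact add_le_add_right j.one_le _
      · exact add_le_add_right hj.2 _
    -- sector estimates inside a block
    have hsecpair : ∀ (s : ℕ) (x y : ℕ+), x ∈ Is s → y ∈ Is s →
        θ < (x : ℝ) / (y : ℝ) ∧ (x : ℝ) / (y : ℝ) < 1 / θ := by
      intro s x y hx hy
      obtain ⟨hx1, hx2⟩ := hIsbound s x hx
      obtain ⟨hy1, hy2⟩ := hIsbound s y hy
      have hx1R : (Aθ : ℝ) * (2 : ℝ) ^ s < ((x : ℕ) : ℝ) := by exact_mod_cast hx1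
      have hx2R : ((x : ℕ) : ℝ) ≤ ((Aθ : ℝ) + 1) * (2 : ℝ) ^ s := by exact_mod_cast hx2
      have hy1R : (Aθ : ℝ) * (2 : ℝ) ^ s < ((y : ℕ) : ℝ) := by exact_mod_cast hy1
      have hy2R : ((y : ℕ) : ℝ) ≤ ((Aθ : ℝ) + 1) * (2 : ℝ) ^ s := by exact_mod_cast hy2
      have h2s : (0 : ℝ) < (2 : ℝ) ^ s := by positivity
      have hypos : (0 : ℝ) < ((y : ℕ) : ℝ) := by exact_mod_cast y.pos
      have hkey : θ * (((Aθ : ℝ) + 1) * (2 : ℝ) ^ s) < (Aθ : ℝ) * (2 : ℝ) ^ s := by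
        nlinarith
      constructor
      · rw [lt_div_iff₀ hypos]
        have : θ * ((y : ℕ) : ℝ) ≤ θ * (((Aθ : ℝ) + 1) * (2 : ℝ) ^ s) :=
          mul_le_mul_of_nonneg_left hy2R hθ0.le
        linarith
      · rw [div_lt_div_iff₀ hypos hθ0]
        have : θ * ((x : ℕ) : ℝ) ≤ θ * (((Aθ : ℝ) + 1) * (2 : ℝ) ^ s) :=
          mul_le_mul_of_nonneg_left hx2R hθ0.le
        nlinarith
    -- the shifted maxima and normalizers
    set Y : ℕ → Ω → ℝ := fun s ω =>
      finMax (cubeIdx d (diag d ((2 : ℕ+) ^ s))) (fun i => h fun l => X (emb s (i l)) ω) with hYdef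
    set a : ℕ → ℝ := fun s => γ (diag d ((2 : ℕ+) ^ s)) with hadef
    have hapos : ∀ s, 0 < a s := fun s => hγpos _
    have hadd : ∀ (k s : ℕ), a (s + k) ≤ C ^ k * a s := by
      intro k s
      have he : diag d ((2 : ℕ+) ^ (s + k)) = fun j => 2 ^ k * diag d ((2 : ℕ+) ^ s) j := by
        funext j
        show (2 : ℕ+) ^ (s + k) = 2 ^ k * 2 ^ s
        rw [pow_add, mul_comm]
      calc a (s + k) = γ (fun j => 2 ^ k * diag d ((2 : ℕ+) ^ s) j) := by
            simp only [hadef]; rw [he]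
        _ ≤ C ^ k * a s := gamma_two_pow_mul γ C hC.le hγdbl k _
    -- the cube membership gives block membership for components
    have hcubemem : ∀ (s : ℕ) (i : Fin d → ℕ+), i ∈ cubeIdx d (diag d ((2 : ℕ+) ^ s)) →
        (Function.Injective i ∧ ∀ l, i l ∈ Finset.Icc 1 ((2 : ℕ+) ^ s)) := by
      intro s i hi
      simp only [cubeIdx, Finset.mem_filter, Finset.mem_Icc] at hi
      exact ⟨hi.2, fun l => Finset.mem_Icc.2 ⟨(i l).one_le, hi.1.2 l⟩⟩
    -- Y is dominated by the sector maximum at a slightly larger diagonal scale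
    have hYZ : ∀ (s : ℕ) (ω : Ω), Y s ω ≤
        finMax (secIdx d θ (diag d ((2 : ℕ+) ^ (s + K')))) (fun i => h fun l => X (i l) ω) := by
      intro s ω
      apply finMax_le_finMax
      intro i hi
      obtain ⟨hinj, hmem⟩ := hcubemem s i hi
      refine ⟨fun l => emb s (i l), ?_, le_of_eq rfl⟩
      simp only [secIdx, Finset.mem_filter, Finset.mem_Icc]
      refine ⟨⟨fun l => (emb s (i l)).one_le, fun l => ?_⟩, fun l k => ?_, (hembinj s).comp hinj⟩
      · -- emb s (i l) ≤ diag d (2^(s+K')) l = 2^(s+K')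
        show emb s (i l) ≤ (2 : ℕ+) ^ (s + K')
        rw [← PNat.coe_le_coe]
        have hb := (hIsbound s _ (hYmem s (i l) (hmem l))).2
        have h2c : ((2 : ℕ+) : ℕ) = 2 := rfl
        rw [PNat.pow_coe, h2c]
        calc ((emb s (i l) : ℕ+) : ℕ) ≤ (Aθ + 1) * 2 ^ s := hb
          _ ≤ 2 ^ K' * 2 ^ s := Nat.mul_le_mul_right _ h2K
          _ = 2 ^ (s + K') := by rw [← pow_add, Nat.add_comm]
      · exact hsecpair s _ _ (hYmem s (i l) (hmem l)) (hYmem s (i k) (hmem k))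
    -- a.s. convergence of the shifted maxima, from the sectorial hypothesis
    have hYae : ∀ᵐ ω ∂μ, Tendsto (fun s : ℕ => Y s ω / a (s + K')) atTop (𝓝 0) := by
      filter_upwards [h1] with ω hω
      have hdiagsec : ∀ m : ℕ+, diag d m ∈ sector d θ := by
        intro m l k
        have hm : ((m : ℕ) : ℝ) ≠ 0 := by
          have := m.pos
          positivity
        show θ < (m : ℝ) / (m : ℝ) ∧ (m : ℝ) / (m : ℝ) < 1 / θ
        rw [div_self hm]
        constructor
        · exact hθ1
        · rw [lt_div_iff₀ hθ0, one_mul]; exact hθ1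
      have hdiagT : Tendsto (fun m : ℕ+ => diag d m) atTop (sectorFilter d θ) := by
        rw [sectorFilter]
        refine tendsto_inf.2 ⟨?_, tendsto_principal.2 (Eventually.of_forall hdiagsec)⟩
        rw [tendsto_atTop]
        intro b
        haveI : Nonempty (Fin d) := ⟨⟨0, hdpos⟩⟩
        have hne : (Finset.univ : Finset (Fin d)).Nonempty := Finset.univ_nonempty
        filter_upwards [eventually_ge_atTop (Finset.univ.sup' hne b)] with m hm j
        exact le_trans (Finset.le_sup' b (Finset.mem_univ j)) hm
      have hpowT : Tendsto (fun s : ℕ => (2 : ℕ+) ^ (s + K')) atTop atTop := by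
        rw [tendsto_atTop]
        intro b
        filter_upwards [eventually_ge_atTop (b : ℕ)] with s hs
        rw [← PNat.coe_le_coe, PNat.pow_coe]
        calc (b : ℕ) ≤ s := hs
          _ ≤ 2 ^ s := (Nat.lt_two_pow_self (n := s)).le
          _ ≤ 2 ^ (s + K') := Nat.pow_le_pow_right (by norm_num) (Nat.le_add_right _ _)
      have hZT := hω.comp (hdiagT.comp hpowT)
      refine squeeze_zero' (Eventually.of_forall fun s =>
        div_nonneg (finMax_nonneg _ _) (hapos _).le)
        (Eventually.of_forall fun s => ?_) hZT
      exact (div_le_div_iff_of_pos_right (hapos (s + K'))).2 (hYZ s ω)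
    -- Ψ s : the value of Y s as a function of the variables in block Is s
    set vex : ∀ s : ℕ, ({x // x ∈ Is s} → E) → ℕ+ → E := fun s v j =>
      if hj : j ∈ Is s then v ⟨j, hj⟩ else hEne.some with hvexdef
    set Ψ : ∀ s : ℕ, ({x // x ∈ Is s} → E) → ℝ := fun s v =>
      finMax (cubeIdx d (diag d ((2 : ℕ+) ^ s)))
        (fun i => h fun l => vex s v (emb s (i l))) with hΨdef
    have hΨm : ∀ s, Measurable (Ψ s) := by
      intro s
      refine measurable_finMax _ fun i => hhm.comp (measurable_pi_lambda _ fun l => ?_)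
      by_cases hj : emb s (i l) ∈ Is s
      · simp only [hvexdef, dif_pos hj]
        exact measurable_pi_apply _
      · simp only [hvexdef, dif_neg hj]
        exact measurable_const
    have hYΨ : ∀ (s : ℕ) (ω : Ω), Y s ω = Ψ s (fun j => X j.1 ω) := by
      intro s ω
      refine finMax_congr fun i hi => ?_
      obtain ⟨-, hmem⟩ := hcubemem s i hi
      congr 1
      funext l
      simp only [hvexdef]
      rw [dif_pos (hYmem s (i l) (hmem l))]
    -- the cube maximum as a function of the variables in Icc 1 (2^s)
    set uex : ∀ s : ℕ, ({x // x ∈ Finset.Icc 1 ((2 : ℕ+) ^ s)} → E) → ℕ+ → E := fun s v j =>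
      if hj : j ∈ Finset.Icc 1 ((2 : ℕ+) ^ s) then v ⟨j, hj⟩ else hEne.some with huexdef
    set Φ : ∀ s : ℕ, ({x // x ∈ Finset.Icc 1 ((2 : ℕ+) ^ s)} → E) → ℝ := fun s v =>
      finMax (cubeIdx d (diag d ((2 : ℕ+) ^ s)))
        (fun i => h fun l => uex s v (i l)) with hΦdef
    have hΦm : ∀ s, Measurable (Φ s) := by
      intro s
      refine measurable_finMax _ fun i => hhm.comp (measurable_pi_lambda _ fun l => ?_)
      by_cases hj : i l ∈ Finset.Icc 1 ((2 : ℕ+) ^ s)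
      · simp only [huexdef, dif_pos hj]
        exact measurable_pi_apply _
      · simp only [huexdef, dif_neg hj]
        exact measurable_const
    have hcbΦ : ∀ (s : ℕ) (ω : Ω),
        finMax (cubeIdx d (diag d ((2 : ℕ+) ^ s))) (fun i => h fun l => X (i l) ω)
          = Φ s (fun j => X j.1 ω) := by
      intro s ω
      refine finMax_congr fun i hi => ?_
      obtain ⟨-, hmem⟩ := hcubemem s i hi
      congr 1
      funext l
      simp only [huexdef]
      rw [dif_pos (hmem l)]
    have hYΦ : ∀ (s : ℕ) (ω : Ω), Y s ω = Φ s (fun j => X (emb s j.1) ω) := by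
      intro s ω
      refine finMax_congr fun i hi => ?_
      obtain ⟨-, hmem⟩ := hcubemem s i hi
      congr 1
      funext l
      simp only [huexdef]
      rw [dif_pos (hmem l)]
    -- identical distribution of the cube maximum and the shifted maximum
    have hIdcb : ∀ s : ℕ, IdentDistrib
        (fun ω => finMax (cubeIdx d (diag d ((2 : ℕ+) ^ s))) (fun i => h fun l => X (i l) ω))
        (Y s) μ μ := by
      intro s
      have hval : Function.Injective
          (fun j : {x // x ∈ Finset.Icc 1 ((2 : ℕ+) ^ s)} => j.1) := Subtype.val_injective
      have hvemb : Function.Injective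
          (fun j : {x // x ∈ Finset.Icc 1 ((2 : ℕ+) ^ s)} => emb s j.1) :=
        (hembinj s).comp Subtype.val_injective
      have hmap1 := map_restrict_eq_pi μ X hXm hXind hXid _ hval
      have hmap2 := map_restrict_eq_pi μ X hXm hXind hXid _ hvemb
      have hIdvec : IdentDistrib
          (fun ω (j : {x // x ∈ Finset.Icc 1 ((2 : ℕ+) ^ s)}) => X j.1 ω)
          (fun ω (j : {x // x ∈ Finset.Icc 1 ((2 : ℕ+) ^ s)}) => X (emb s j.1) ω) μ μ :=
        ⟨(measurable_pi_lambda _ fun j => hXm _).aemeasurable,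
         (measurable_pi_lambda _ fun j => hXm _).aemeasurable, by rw [hmap1, hmap2]⟩
      have hcomp := hIdvec.comp (hΦm s)
      have e1 : (fun ω => finMax (cubeIdx d (diag d ((2 : ℕ+) ^ s)))
          (fun i => h fun l => X (i l) ω))
          = (Φ s) ∘ (fun ω (j : {x // x ∈ Finset.Icc 1 ((2 : ℕ+) ^ s)}) => X j.1 ω) :=
        funext fun ω => hcbΦ s ω
      have e2 : Y s = (Φ s) ∘ (fun ω (j : {x // x ∈ Finset.Icc 1 ((2 : ℕ+) ^ s)}) =>
          X (emb s j.1) ω) := funext fun ω => hYΦ s ω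
      rw [e1, e2]
      exact hcomp
    -- Borel–Cantelli: for each rational level, eventually the cube maximum is small
    have hBC : ∀ q : ℕ, ∀ᵐ ω ∂μ, ∀ᶠ s in atTop,
        finMax (cubeIdx d (diag d ((2 : ℕ+) ^ s))) (fun i => h fun l => X (i l) ω)
          ≤ (1 / ((q : ℝ) + 1)) * a (s + K') := by
      intro q
      set ε : ℝ := 1 / ((q : ℝ) + 1) with hεdef
      have hεpos : 0 < ε := by rw [hεdef]; positivity
      set Mset : ∀ s : ℕ, Set ({x // x ∈ Is s} → E) := fun s =>
        Ψ s ⁻¹' Set.Ioi (ε * a (s + K')) with hMsetdef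
      have hMsetm : ∀ s, MeasurableSet (Mset s) := fun s => (hΨm s) measurableSet_Ioi
      set A : ℕ → Set Ω := fun s =>
        (fun ω (j : {x // x ∈ Is s}) => X j.1 ω) ⁻¹' Mset s with hAdef
      have hAm : ∀ s, MeasurableSet (A s) := fun s =>
        (measurable_pi_lambda (fun ω (j : {x // x ∈ Is s}) => X j.1 ω)
          fun j => hXm j.1) (hMsetm s)
      have hAeq : ∀ s, A s = {ω | ε * a (s + K') < Y s ω} := by
        intro s
        ext ω
        simp only [hAdef, Set.mem_preimage, hMsetdef, Set.mem_Ioi, Set.mem_setOf_eq]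
        rw [hYΨ s ω]
      have hiIndep : iIndepSet A μ := by
        rw [iIndepSet_iff_meas_biInter hAm]
        intro S
        exact meas_biInter_blocks μ X hXm hXind Is hIsdisj Mset hMsetm S
      have hsum : ∑' s, μ (A s) ≠ ⊤ := by
        intro htop
        have hone := measure_limsup_eq_one hAm hiIndep htop
        have hzero : ∀ᵐ ω ∂μ, ω ∉ limsup A atTop := by
          filter_upwards [hYae] with ω hω hmem
          rw [mem_limsup_iff_frequently_mem] at hmem
          have hev : ∀ᶠ s in atTop, Y s ω < ε * a (s + K') := by
            filter_upwards [hω.eventually_lt_const hεpos] with s hs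
            rw [div_lt_iff₀ (hapos _)] at hs
            linarith [hs]
          obtain ⟨s, hs1, hs2⟩ := (hmem.and_eventually hev).exists
          rw [hAeq s] at hs1
          exact absurd hs2 (not_lt.2 hs1.le)
        rw [← measure_eq_zero_iff_ae_notMem] at hzero
        rw [hone] at hzero
        exact one_ne_zero hzero
      have hid : ∀ s, μ (A s) = μ {ω | ε * a (s + K') <
          finMax (cubeIdx d (diag d ((2 : ℕ+) ^ s))) (fun i => h fun l => X (i l) ω)} := by
        intro s
        have hmm := ((hIdcb s).measure_mem_eq
          (measurableSet_Ioi (a := ε * a (s + K'))))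
        rw [hAeq s,
          show {ω | ε * a (s + K') < Y s ω} = Y s ⁻¹' Set.Ioi (ε * a (s + K')) from rfl,
          show {ω | ε * a (s + K') < finMax (cubeIdx d (diag d ((2 : ℕ+) ^ s)))
              (fun i => h fun l => X (i l) ω)}
            = (fun ω => finMax (cubeIdx d (diag d ((2 : ℕ+) ^ s)))
              (fun i => h fun l => X (i l) ω)) ⁻¹' Set.Ioi (ε * a (s + K')) from rfl]
        exact hmm.symm
      have hsum' : ∑' s, μ {ω | ε * a (s + K') <
          finMax (cubeIdx d (diag d ((2 : ℕ+) ^ s))) (fun i => h fun l => X (i l) ω)} ≠ ⊤ := by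
        rw [← tsum_congr hid]
        exact hsum
      filter_upwards [ae_eventually_notMem hsum'] with ω hω
      filter_upwards [hω] with s hs
      exact not_lt.1 hs
    -- conclude: a.s. convergence along the diagonal
    filter_upwards [ae_all_iff.2 hBC] with ω hω
    rw [Metric.tendsto_atTop]
    intro ε hε
    have hCp : (0 : ℝ) < C ^ (K' + 1) := pow_pos hC _
    obtain ⟨q, hq⟩ := exists_nat_gt (C ^ (K' + 1) / ε)
    have hq1 : (0 : ℝ) < (q : ℝ) + 1 := by positivity
    have hqε : C ^ (K' + 1) * (1 / ((q : ℝ) + 1)) < ε := by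
      rw [div_lt_iff₀ hε] at hq
      rw [mul_one_div, div_lt_iff₀ hq1]
      nlinarith
    obtain ⟨S₀, hS₀⟩ := eventually_atTop.1 (hω q)
    refine ⟨(2 : ℕ+) ^ S₀, fun m hm => ?_⟩
    set s : ℕ := Nat.log 2 (m : ℕ) with hsdef
    have h2c : ((2 : ℕ+) : ℕ) = 2 := rfl
    have hsS : S₀ ≤ s := by
      have hm' : (2 : ℕ) ^ S₀ ≤ (m : ℕ) := by
        have := (PNat.coe_le_coe _ _).2 hm
        rwa [PNat.pow_coe, h2c] at this
      calc S₀ = Nat.log 2 (2 ^ S₀) := (Nat.log_pow (by norm_num) S₀).symm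
        _ ≤ s := Nat.log_mono_right hm'
    have hlow : (2 : ℕ) ^ s ≤ (m : ℕ) := Nat.pow_log_le_self 2 m.ne_zero
    have hhigh : (m : ℕ) < 2 ^ (s + 1) := Nat.lt_pow_succ_log_self (by norm_num) _
    have hmle : m ≤ (2 : ℕ+) ^ (s + 1) := by
      rw [← PNat.coe_le_coe, PNat.pow_coe, h2c]
      exact hhigh.le
    have hcbmono : finMax (cubeIdx d (diag d m)) (fun i => h fun l => X (i l) ω)
        ≤ finMax (cubeIdx d (diag d ((2 : ℕ+) ^ (s + 1)))) (fun i => h fun l => X (i l) ω) := by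
      apply finMax_le_finMax
      intro i hi
      refine ⟨i, ?_, le_refl _⟩
      simp only [cubeIdx, Finset.mem_filter, Finset.mem_Icc] at hi ⊢
      exact ⟨⟨hi.1.1, fun j => (hi.1.2 j).trans hmle⟩, hi.2⟩
    have hstep := hS₀ (s + 1) (hsS.trans (Nat.le_succ s))
    have haK : a (s + 1 + K') ≤ C ^ (K' + 1) * a s := by
      have he : s + 1 + K' = s + (K' + 1) := by omega
      rw [he]
      exact hadd (K' + 1) s
    have hγm : a s ≤ γ (diag d m) := by
      apply hγmono
      intro j
      show (2 : ℕ+) ^ s ≤ m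
      rw [← PNat.coe_le_coe, PNat.pow_coe, h2c]
      exact hlow
    have hq0 : (0 : ℝ) ≤ 1 / ((q : ℝ) + 1) := by positivity
    have h1' : finMax (cubeIdx d (diag d m)) (fun i => h fun l => X (i l) ω)
        ≤ (1 / ((q : ℝ) + 1)) * (C ^ (K' + 1) * a s) := by
      refine le_trans (hcbmono.trans hstep) ?_
      exact mul_le_mul_of_nonneg_left haK hq0
    have hfr : finMax (cubeIdx d (diag d m)) (fun i => h fun l => X (i l) ω) / γ (diag d m)
        ≤ ((1 / ((q : ℝ) + 1)) * (C ^ (K' + 1) * a s)) / a s := by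
      refine div_le_div₀ (mul_nonneg hq0 (mul_nonneg hCp.le (hapos s).le)) h1' (hapos s) hγm
    rw [Real.dist_eq, sub_zero,
      abs_of_nonneg (div_nonneg (finMax_nonneg _ _) (hγpos _).le)]
    have hfin : ((1 / ((q : ℝ) + 1)) * (C ^ (K' + 1) * a s)) / a s
        = C ^ (K' + 1) * (1 / ((q : ℝ) + 1)) := by
      have he : (1 / ((q : ℝ) + 1)) * (C ^ (K' + 1) * a s) / a s
          = (1 / ((q : ℝ) + 1)) * C ^ (K' + 1) * (a s / a s) := by ring
      rw [he, div_self (hapos s).ne', mul_one, mul_comm]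
    calc finMax (cubeIdx d (diag d m)) (fun i => h fun l => X (i l) ω) / γ (diag d m)
        ≤ ((1 / ((q : ℝ) + 1)) * (C ^ (K' + 1) * a s)) / a s := hfr
      _ = C ^ (K' + 1) * (1 / ((q : ℝ) + 1)) := hfin
      _ < ε := hqε
  · intro h2
    classical
    have hdpos : 0 < d := hd
    have hFin : Nonempty (Fin d) := ⟨⟨0, hdpos⟩⟩
    have hne : (Finset.univ : Finset (Fin d)).Nonempty := Finset.univ_nonempty
    set Kc : ℕ := ⌈1 / θ⌉₊ with hKcdef
    have hθKc : 1 / θ ≤ (2 : ℝ) ^ Kc := by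
      calc 1 / θ ≤ (Kc : ℝ) := Nat.le_ceil _
        _ ≤ (2 : ℝ) ^ Kc := by
            have := Nat.lt_two_pow_self (n := Kc)
            calc (Kc : ℝ) ≤ ((2 ^ Kc : ℕ) : ℝ) := by exact_mod_cast this.le
              _ = (2 : ℝ) ^ Kc := by push_cast; ring
    -- the coordinatewise max
    set Mx : (Fin d → ℕ+) → ℕ+ := fun n => Finset.univ.sup' hne n with hMxdef
    have hMxmem : ∀ n : Fin d → ℕ+, ∃ l, Mx n = n l := fun n => by
      obtain ⟨l, _, hl⟩ := Finset.exists_mem_eq_sup' hne n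
      exact ⟨l, hl⟩
    have hleMx : ∀ (n : Fin d → ℕ+) (j : Fin d), n j ≤ Mx n := fun n j =>
      Finset.le_sup' n (Finset.mem_univ j)
    -- subset of index sets
    have hsub : ∀ n, secIdx d θ n ⊆ cubeIdx d (diag d (Mx n)) := by
      intro n i hi
      simp only [secIdx, Finset.mem_filter, Finset.mem_Icc] at hi
      simp only [cubeIdx, Finset.mem_filter, Finset.mem_Icc]
      refine ⟨⟨hi.1.1, fun j => (hi.1.2 j).trans (hleMx n j)⟩, hi.2.2⟩
    -- γ comparison on the sector
    have hγcomp : ∀ n ∈ sector d θ, γ (diag d (Mx n)) ≤ C ^ Kc * γ n := by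
      intro n hn
      obtain ⟨l₀, hl₀⟩ := hMxmem n
      have hdle : diag d (Mx n) ≤ fun j => 2 ^ Kc * n j := by
        intro j
        have hsec : (n l₀ : ℝ) / (n j : ℝ) < 1 / θ := (hn l₀ j).2
        have hjpos : (0 : ℝ) < ((n j : ℕ) : ℝ) := by exact_mod_cast (n j).pos
        have hlt : ((n l₀ : ℕ) : ℝ) < (2 : ℝ) ^ Kc * ((n j : ℕ) : ℝ) := by
          have := lt_of_lt_of_le hsec hθKc
          rw [div_lt_iff₀ hjpos] at this
          exact this
        have hnat : (n l₀ : ℕ) ≤ 2 ^ Kc * (n j : ℕ) := by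
          have : ((n l₀ : ℕ) : ℝ) ≤ ((2 ^ Kc * (n j : ℕ) : ℕ) : ℝ) := by
            push_cast
            exact hlt.le
          exact_mod_cast this
        show Mx n ≤ 2 ^ Kc * n j
        rw [hl₀]
        rw [← PNat.coe_le_coe]
        simpa [PNat.mul_coe, PNat.pow_coe] using hnat
      exact (hγmono hdle).trans (gamma_two_pow_mul γ C hC.le hγdbl Kc n)
    filter_upwards [h2] with ω hω
    -- Mx tends to atTop along the sector filter
    have hMxT : Tendsto Mx (sectorFilter d θ) atTop := by
      refine Tendsto.mono_left ?_ inf_le_left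
      rw [tendsto_atTop]
      intro b
      filter_upwards [eventually_ge_atTop (diag d b)] with n hn
      exact le_trans (hn ⟨0, hdpos⟩) (hleMx n _)
    have hcomp : Tendsto (fun n => finMax (cubeIdx d (diag d (Mx n)))
        (fun i => h fun l => X (i l) ω) / γ (diag d (Mx n))) (sectorFilter d θ) (𝓝 0) :=
      hω.comp hMxT
    have hCcomp : Tendsto (fun n => C ^ Kc * (finMax (cubeIdx d (diag d (Mx n)))
        (fun i => h fun l => X (i l) ω) / γ (diag d (Mx n)))) (sectorFilter d θ) (𝓝 0) := by
      have := hcomp.const_mul (C ^ Kc)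
      simpa using this
    refine squeeze_zero' (Eventually.of_forall fun n =>
      div_nonneg (finMax_nonneg _ _) (hγpos n).le) ?_ hCcomp
    have : ∀ n ∈ sector d θ, finMax (secIdx d θ n) (fun i => h fun l => X (i l) ω) / γ n
        ≤ C ^ Kc * (finMax (cubeIdx d (diag d (Mx n)))
          (fun i => h fun l => X (i l) ω) / γ (diag d (Mx n))) := by
      intro n hn
      rw [mul_div_assoc', div_le_div_iff₀ (hγpos n) (hγpos (diag d (Mx n)))]
      have h1 : finMax (secIdx d θ n) (fun i => h fun l => X (i l) ω)
          ≤ finMax (cubeIdx d (diag d (Mx n))) (fun i => h fun l => X (i l) ω) :=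
        finMax_le_finMax fun i hi => ⟨i, hsub n hi, le_refl _⟩
      have h2' := hγcomp n hn
      calc finMax (secIdx d θ n) (fun i => h fun l => X (i l) ω) * γ (diag d (Mx n))
          ≤ finMax (cubeIdx d (diag d (Mx n))) (fun i => h fun l => X (i l) ω)
            * (C ^ Kc * γ n) :=
            mul_le_mul h1 h2' (hγpos _).le (finMax_nonneg _ _)
        _ = C ^ Kc * finMax (cubeIdx d (diag d (Mx n))) (fun i => h fun l => X (i l) ω)
            * γ n := by ring
    rw [sectorFilter]
    exact eventually_inf_principal.2 (Eventually.of_forall this)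
end
end

section
/- If (1/γ_n) Σ_{i ≤ n, i ∈ S_θ^d, coordinates distinct} ε_i h(X_i) → 0 almost surely as n → ∞ in the sector S_θ^d, then (1/γ_n²) Σ_{i ≤ n, i ∈ S_θ^d, coordinates distinct} h²(X_i) → 0 almost surely as n → ∞ in the sector S_θ^d. -/
open MeasureTheory ProbabilityTheory Filter Finset
open scoped Topology ENNReal symmDiff

noncomputable section

set_option linter.unusedSectionVars false
set_option linter.unusedVariables false
set_option maxHeartbeats 1000000

namespace SecAux

variable {Ω' : Type*} [MeasurableSpace Ω'] {μ' : Measure Ω'} [IsProbabilityMeasure μ']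
variable {ι : Type*} [DecidableEq ι] {ε : ι → Ω' → ℝ}

/-- Walsh monomial. -/
def W (ε : ι → Ω' → ℝ) (F : Finset ι) : Ω' → ℝ := fun ω => ∏ p ∈ F, ε p ω

omit [DecidableEq ι] in
lemma W_meas (hm : ∀ p, Measurable (ε p)) (F : Finset ι) : Measurable (W ε F) :=
  Finset.measurable_prod _ fun p _ => hm p

omit [DecidableEq ι] in
lemma W_bdd (hsq : ∀ p, ∀ᵐ ω ∂μ', ε p ω ^ 2 = 1) (F : Finset ι) :
    ∀ᵐ ω ∂μ', |W ε F ω| ≤ 1 := by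
  have : ∀ᵐ ω ∂μ', ∀ p ∈ F, ε p ω ^ 2 = 1 :=
    (ae_ball_iff F.countable_toSet).2 fun p _ => hsq p
  filter_upwards [this] with ω hω
  rw [W, Finset.abs_prod]
  refine Finset.prod_le_one (fun p _ => abs_nonneg _) fun p hp => ?_
  have := hω p hp
  nlinarith [abs_nonneg (ε p ω), sq_abs (ε p ω)]

lemma W_mul (hsq : ∀ p, ∀ᵐ ω ∂μ', ε p ω ^ 2 = 1) (F G : Finset ι) :
    (fun ω => W ε F ω * W ε G ω) =ᵐ[μ'] W ε (F ∆ G) := by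
  have : ∀ᵐ ω ∂μ', ∀ p ∈ F ∩ G, ε p ω ^ 2 = 1 :=
    (ae_ball_iff (F ∩ G).countable_toSet).2 fun p _ => hsq p
  filter_upwards [this] with ω hω
  have h1 : W ε F ω = (∏ p ∈ F \ G, ε p ω) * ∏ p ∈ F ∩ G, ε p ω := by
    rw [W, ← Finset.prod_union (Finset.disjoint_sdiff_inter F G), Finset.sdiff_union_inter]
  have h2 : W ε G ω = (∏ p ∈ G \ F, ε p ω) * ∏ p ∈ F ∩ G, ε p ω := by
    rw [Finset.inter_comm F G, W,
      ← Finset.prod_union (Finset.disjoint_sdiff_inter G F), Finset.sdiff_union_inter]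
  have h3 : W ε (F ∆ G) ω = (∏ p ∈ F \ G, ε p ω) * ∏ p ∈ G \ F, ε p ω := by
    rw [W, symmDiff_def, Finset.sup_eq_union,
      Finset.prod_union disjoint_sdiff_sdiff]
  have h4 : ∏ p ∈ F ∩ G, ε p ω * ε p ω = 1 := by
    rw [Finset.prod_eq_one]
    intro p hp
    have := hω p hp; nlinarith
  calc W ε F ω * W ε G ω
      = ((∏ p ∈ F \ G, ε p ω) * ∏ p ∈ G \ F, ε p ω) * ∏ p ∈ F ∩ G, ε p ω * ε p ω := by
        rw [h1, h2, Finset.prod_mul_distrib]; ring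
    _ = W ε (F ∆ G) ω := by rw [h4, h3, mul_one]

/-- Integrability from an a.e. bound. -/
lemma intble {f : Ω' → ℝ} (hf : Measurable f) {C : ℝ} (hC : ∀ᵐ ω ∂μ', |f ω| ≤ C) :
    Integrable f μ' := by
  refine (MemLp.of_bound hf.aestronglyMeasurable C ?_).integrable le_rfl
  simpa [Real.norm_eq_abs] using hC

omit [DecidableEq ι] in
lemma W_integrable (hm : ∀ p, Measurable (ε p)) (hsq : ∀ p, ∀ᵐ ω ∂μ', ε p ω ^ 2 = 1)
    (F : Finset ι) : Integrable (W ε F) μ' :=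
  intble (W_meas hm F) (W_bdd hsq F)

lemma integral_W (hm : ∀ p, Measurable (ε p)) (hsq : ∀ p, ∀ᵐ ω ∂μ', ε p ω ^ 2 = 1)
    (hind : iIndepFun ε μ')
    (hzero : ∀ p, ∫ ω, ε p ω ∂μ' = 0) (F : Finset ι) :
    ∫ ω, W ε F ω ∂μ' = if F = ∅ then 1 else 0 := by
  classical
  rcases eq_or_ne F ∅ with rfl | hF
  · simp [W]
  · simp only [if_neg hF]
    obtain ⟨p, hp⟩ := Finset.nonempty_iff_ne_empty.2 hF
    have hWe : W ε F = fun ω => ε p ω * W ε (F.erase p) ω := by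
      funext ω
      exact (Finset.mul_prod_erase F (fun q => ε q ω) hp).symm
    have hdisj : Disjoint ({p} : Finset ι) (F.erase p) := by
      simp [Finset.disjoint_left]
    have hIF := hind.indepFun_finset {p} (F.erase p) hdisj hm
    have hφ : Measurable fun x : ({p} : Finset ι) → ℝ => x ⟨p, Finset.mem_singleton_self p⟩ :=
      measurable_pi_apply _
    have hψ : Measurable fun x : ↥(F.erase p) → ℝ => ∏ q, x q :=
      Finset.measurable_prod _ fun q _ => measurable_pi_apply q
    have hI : IndepFun (ε p) (W ε (F.erase p)) μ' := by
      have hc := hIF.comp hφ hψ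
      convert hc using 1
      · rfl
      funext ω
      simp only [Function.comp_apply, W]
      exact (Finset.prod_coe_sort (F.erase p) (fun q => ε q ω)).symm
    have hεint : Integrable (ε p) μ' := by
      refine intble (hm p) (C := 1) ?_
      filter_upwards [hsq p] with ω hω
      nlinarith [abs_nonneg (ε p ω), sq_abs (ε p ω)]
    have hmul : ∫ ω, ε p ω * W ε (F.erase p) ω ∂μ'
        = (∫ ω, ε p ω ∂μ') * ∫ ω, W ε (F.erase p) ω ∂μ' :=
      hI.integral_mul_eq_mul_integral hεint.aestronglyMeasurable (W_integrable hm hsq _).aestronglyMeasurable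
    rw [hWe, hmul, hzero p, zero_mul]

variable {κ : Type*}

/-- A multilinear Walsh polynomial ("chaos"). -/
def chaos (ε : ι → Ω' → ℝ) (s : Finset κ) (a : κ → ℝ) (g : κ → Finset ι) : Ω' → ℝ :=
  fun ω => ∑ i ∈ s, a i * W ε (g i) ω

omit [DecidableEq ι] in
lemma chaos_meas (hm : ∀ p, Measurable (ε p)) (s : Finset κ) (a : κ → ℝ) (g : κ → Finset ι) :
    Measurable (chaos ε s a g) :=
  Finset.measurable_sum _ fun i _ => (W_meas hm (g i)).const_mul (a i)

omit [DecidableEq ι] in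
lemma chaos_bdd (hsq : ∀ p, ∀ᵐ ω ∂μ', ε p ω ^ 2 = 1) (s : Finset κ) (a : κ → ℝ)
    (g : κ → Finset ι) : ∀ᵐ ω ∂μ', |chaos ε s a g ω| ≤ ∑ i ∈ s, |a i| := by
  have : ∀ᵐ ω ∂μ', ∀ i ∈ s, |W ε (g i) ω| ≤ 1 :=
    (ae_ball_iff s.countable_toSet).2 fun i _ => W_bdd hsq (g i)
  filter_upwards [this] with ω hω
  calc |chaos ε s a g ω| ≤ ∑ i ∈ s, |a i * W ε (g i) ω| := Finset.abs_sum_le_sum_abs _ _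
    _ ≤ ∑ i ∈ s, |a i| := by
        refine Finset.sum_le_sum fun i hi => ?_
        rw [abs_mul]
        nlinarith [abs_nonneg (a i), abs_nonneg (W ε (g i) ω), hω i hi]

omit [DecidableEq ι] in
lemma chaos_intble (hm : ∀ p, Measurable (ε p)) (hsq : ∀ p, ∀ᵐ ω ∂μ', ε p ω ^ 2 = 1)
    (s : Finset κ) (a : κ → ℝ) (g : κ → Finset ι) : Integrable (chaos ε s a g) μ' :=
  intble (chaos_meas hm s a g) (chaos_bdd hsq s a g)

lemma chaos_mul {κ' : Type*} (hsq : ∀ p, ∀ᵐ ω ∂μ', ε p ω ^ 2 = 1)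
    (s : Finset κ) (a : κ → ℝ) (g : κ → Finset ι)
    (t : Finset κ') (b : κ' → ℝ) (k : κ' → Finset ι) :
    (fun ω => chaos ε s a g ω * chaos ε t b k ω)
      =ᵐ[μ'] chaos ε (s ×ˢ t) (fun p => a p.1 * b p.2) (fun p => g p.1 ∆ k p.2) := by
  have : ∀ᵐ ω ∂μ', ∀ q ∈ s ×ˢ t,
      W ε (g q.1) ω * W ε (k q.2) ω = W ε (g q.1 ∆ k q.2) ω :=
    (ae_ball_iff (s ×ˢ t).countable_toSet).2 fun q _ => W_mul hsq (g q.1) (k q.2)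
  filter_upwards [this] with ω hω
  simp only [chaos]
  rw [Finset.sum_mul_sum, Finset.sum_product]
  refine Finset.sum_congr rfl fun i hi => Finset.sum_congr rfl fun j hj => ?_
  have := hω (i, j) (Finset.mem_product.2 ⟨hi, hj⟩)
  simp only at this
  rw [← this]; ring

lemma integral_chaos (hm : ∀ p, Measurable (ε p)) (hsq : ∀ p, ∀ᵐ ω ∂μ', ε p ω ^ 2 = 1)
    (hind : iIndepFun ε μ')
    (hzero : ∀ p, ∫ ω, ε p ω ∂μ' = 0) (s : Finset κ) (a : κ → ℝ) (g : κ → Finset ι) :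
    ∫ ω, chaos ε s a g ω ∂μ' = ∑ i ∈ s, a i * (if g i = ∅ then 1 else 0) := by
  simp only [chaos]
  rw [integral_finset_sum]
  · exact Finset.sum_congr rfl fun i _ => by
      rw [MeasureTheory.integral_const_mul, integral_W hm hsq hind hzero]
  · exact fun i _ => (W_integrable hm hsq (g i)).const_mul (a i)

/-- Measurable and a.e. bounded. -/
def MB (μ' : Measure Ω') (f : Ω' → ℝ) : Prop :=
  Measurable f ∧ ∃ C, ∀ᵐ ω ∂μ', |f ω| ≤ C

omit [IsProbabilityMeasure μ'] in
lemma MB.mul {f g : Ω' → ℝ} (hf : MB μ' f) (hg : MB μ' g) :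
    MB μ' (fun ω => f ω * g ω) := by
  obtain ⟨hfm, Cf, hCf⟩ := hf
  obtain ⟨hgm, Cg, hCg⟩ := hg
  refine ⟨hfm.mul hgm, Cf * Cg, ?_⟩
  filter_upwards [hCf, hCg] with ω h1 h2
  rw [abs_mul]
  exact mul_le_mul h1 h2 (abs_nonneg _) (le_trans (abs_nonneg _) h1)

lemma MB.integrable {f : Ω' → ℝ} (hf : MB μ' f) : Integrable f μ' :=
  intble hf.1 hf.2.choose_spec

omit [DecidableEq ι] in
lemma MB.chaos (hm : ∀ p, Measurable (ε p)) (hsq : ∀ p, ∀ᵐ ω ∂μ', ε p ω ^ 2 = 1)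
    (s : Finset κ) (a : κ → ℝ) (g : κ → Finset ι) : MB μ' (chaos ε s a g) :=
  ⟨chaos_meas hm s a g, _, chaos_bdd hsq s a g⟩

omit [DecidableEq ι] in
lemma MB.eps (hm : ∀ p, Measurable (ε p)) (hsq : ∀ p, ∀ᵐ ω ∂μ', ε p ω ^ 2 = 1) (v : ι) :
    MB μ' (ε v) := by
  refine ⟨hm v, 1, ?_⟩
  filter_upwards [hsq v] with ω hω
  nlinarith [abs_nonneg (ε v ω), sq_abs (ε v ω)]

omit [IsProbabilityMeasure μ'] in
lemma aemul {f₁ f₂ g₁ g₂ : Ω' → ℝ} (h₁ : f₁ =ᵐ[μ'] g₁) (h₂ : f₂ =ᵐ[μ'] g₂) :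
    (fun ω => f₁ ω * f₂ ω) =ᵐ[μ'] fun ω => g₁ ω * g₂ ω := by
  filter_upwards [h₁, h₂] with ω e1 e2
  rw [e1, e2]


omit [IsProbabilityMeasure μ'] in
lemma MB.add {f g : Ω' → ℝ} (hf : MB μ' f) (hg : MB μ' g) :
    MB μ' (fun ω => f ω + g ω) := by
  obtain ⟨hfm, Cf, hCf⟩ := hf
  obtain ⟨hgm, Cg, hCg⟩ := hg
  refine ⟨hfm.add hgm, Cf + Cg, ?_⟩
  filter_upwards [hCf, hCg] with ω h1 h2
  exact le_trans (abs_add_le _ _) (add_le_add h1 h2)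

omit [IsProbabilityMeasure μ'] in
lemma MB.const_mul {f : Ω' → ℝ} (c : ℝ) (hf : MB μ' f) :
    MB μ' (fun ω => c * f ω) := by
  obtain ⟨hfm, Cf, hCf⟩ := hf
  refine ⟨hfm.const_mul c, |c| * Cf, ?_⟩
  filter_upwards [hCf] with ω h1
  rw [abs_mul]
  exact mul_le_mul_of_nonneg_left h1 (abs_nonneg c)

omit [IsProbabilityMeasure μ'] in
lemma MB.pow {f : Ω' → ℝ} (hf : MB μ' f) (k : ℕ) : MB μ' (fun ω => f ω ^ k) := by
  obtain ⟨hfm, Cf, hCf⟩ := hf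
  refine ⟨hfm.pow_const k, Cf ^ k, ?_⟩
  filter_upwards [hCf] with ω h1
  rw [abs_pow]
  exact pow_le_pow_left₀ (abs_nonneg _) h1 k

/-- Cauchy–Schwarz for bounded nonnegative functions. -/
lemma cauchy_schwarz {f g : Ω' → ℝ} (hf : MB μ' f) (hg : MB μ' g)
    (hf0 : ∀ ω, 0 ≤ f ω) (hg0 : ∀ ω, 0 ≤ g ω) :
    ∫ ω, f ω * g ω ∂μ' ≤ Real.sqrt (∫ ω, f ω ^ 2 ∂μ') * Real.sqrt (∫ ω, g ω ^ 2 ∂μ') := by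
  have hpq : Real.HolderConjugate 2 2 := Real.HolderConjugate.two_two
  obtain ⟨hfm, Cf, hCf⟩ := hf
  obtain ⟨hgm, Cg, hCg⟩ := hg
  have hfLp : MemLp f (ENNReal.ofReal 2) μ' :=
    MemLp.of_bound hfm.aestronglyMeasurable Cf (by simpa [Real.norm_eq_abs] using hCf)
  have hgLp : MemLp g (ENNReal.ofReal 2) μ' :=
    MemLp.of_bound hgm.aestronglyMeasurable Cg (by simpa [Real.norm_eq_abs] using hCg)
  have H := integral_mul_le_Lp_mul_Lq_of_nonneg hpq (ae_of_all _ hf0) (ae_of_all _ hg0) hfLp hgLp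
  simp only [Real.rpow_two] at H
  rw [← Real.sqrt_eq_rpow, ← Real.sqrt_eq_rpow] at H
  exact H

/-- Multiplying a chaos avoiding `v` by `ε v` yields zero expectation. -/
lemma integral_mul_eps (hm : ∀ p, Measurable (ε p)) (hsq : ∀ p, ∀ᵐ ω ∂μ', ε p ω ^ 2 = 1)
    (hind : iIndepFun ε μ') (hzero : ∀ p, ∫ ω, ε p ω ∂μ' = 0)
    {f : Ω' → ℝ} {t : Finset κ} {b : κ → ℝ} {k : κ → Finset ι} {v : ι}
    (hf : f =ᵐ[μ'] chaos ε t b k) (hv : ∀ q ∈ t, v ∉ k q) :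
    ∫ ω, f ω * ε v ω ∂μ' = 0 := by
  have hεv : ε v = chaos ε ({0} : Finset (Fin 1)) (fun _ => 1) (fun _ => {v}) := by
    funext ω
    simp [chaos, W]
  have hrep : (fun ω => f ω * ε v ω) =ᵐ[μ']
      chaos ε (t ×ˢ ({0} : Finset (Fin 1))) (fun q => b q.1 * 1)
        (fun q => k q.1 ∆ ({v} : Finset ι)) := by
    refine EventuallyEq.trans (aemul hf (EventuallyEq.of_eq hεv)) ?_
    exact chaos_mul hsq t b k _ _ _
  rw [integral_congr_ae hrep, integral_chaos hm hsq hind hzero]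
  refine Finset.sum_eq_zero fun q hq => ?_
  have hq1 : q.1 ∈ t := (Finset.mem_product.1 hq).1
  have hvmem : v ∈ k q.1 ∆ ({v} : Finset ι) := by
    simp [Finset.mem_symmDiff, hv q.1 hq1]
  rw [if_neg (Finset.ne_empty_of_mem hvmem), mul_zero]

omit [DecidableEq ι] in
lemma bonami_const (hm : ∀ p, Measurable (ε p)) (s : Finset κ) (a : κ → ℝ)
    (g : κ → Finset ι) (hg : ∀ i ∈ s, g i = ∅) (d : ℕ) :
    ∫ ω, (chaos ε s a g ω)^4 ∂μ' ≤ 9^d * (∫ ω, (chaos ε s a g ω)^2 ∂μ')^2 := by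
  have hc : chaos ε s a g = fun _ => ∑ i ∈ s, a i := by
    funext ω
    refine Finset.sum_congr rfl fun i hi => ?_
    rw [hg i hi]
    simp [W]
  rw [hc]
  simp only [integral_const, measure_univ, probReal_univ, ENNReal.toReal_one, smul_eq_mul, one_mul]
  have h1 : (1:ℝ) ≤ 9^d := one_le_pow₀ (by norm_num)
  nlinarith [sq_nonneg ((∑ i ∈ s, a i)^2), sq_nonneg (∑ i ∈ s, a i)]

/-- Bonami's hypercontractive fourth-moment bound for Walsh chaos of degree `≤ d`. -/
lemma bonami (hm : ∀ p, Measurable (ε p)) (hsq : ∀ p, ∀ᵐ ω ∂μ', ε p ω ^ 2 = 1)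
    (hind : iIndepFun ε μ') (hzero : ∀ p, ∫ ω, ε p ω ∂μ' = 0) :
    ∀ (n d : ℕ) (s : Finset κ) (a : κ → ℝ) (g : κ → Finset ι),
    (∀ i ∈ s, (g i).card ≤ d) → (s.sup g).card ≤ n →
    ∫ ω, (chaos ε s a g ω)^4 ∂μ' ≤ 9^d * (∫ ω, (chaos ε s a g ω)^2 ∂μ')^2 := by
  classical
  intro n
  induction n with
  | zero =>
    intro d s a g hdeg hcard
    refine bonami_const hm s a g (fun i hi => ?_) d
    have : s.sup g = ∅ := Finset.card_eq_zero.1 (Nat.le_zero.1 hcard)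
    exact (Finset.sup_eq_bot_iff _ _).1 this i hi
  | succ n IH =>
    intro d s a g hdeg hcard
    by_cases hV : s.sup g = ∅
    · exact bonami_const hm s a g (fun i hi => (Finset.sup_eq_bot_iff _ _).1 hV i hi) d
    obtain ⟨v, hvV⟩ := Finset.nonempty_iff_ne_empty.2 hV
    -- decomposition
    set s₀ := s.filter (fun i => v ∉ g i) with hs₀
    set s₁ := s.filter (fun i => v ∈ g i) with hs₁
    set g' := fun i => (g i).erase v with hg'
    set A := chaos ε s₀ a g with hA
    set B := chaos ε s₁ a g' with hB
    -- d = d' + 1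
    obtain ⟨i₀, hi₀s, hvi₀⟩ := Finset.mem_sup.1 hvV
    have hd1 : 1 ≤ d := le_trans (Finset.card_pos.2 ⟨v, hvi₀⟩) (hdeg i₀ hi₀s)
    obtain ⟨d', rfl⟩ : ∃ d', d = d' + 1 := by
      rcases Nat.exists_eq_add_of_le hd1 with ⟨d', hd'⟩
      exact ⟨d', by omega⟩
    -- pointwise decomposition S = ε v * B + A
    have hS : ∀ ω, chaos ε s a g ω = ε v ω * B ω + A ω := by
      intro ω
      rw [hA, hB, chaos, chaos, chaos, Finset.mul_sum,
        ← Finset.sum_filter_add_sum_filter_not s (fun i => v ∈ g i)]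
      congr 1
      refine Finset.sum_congr rfl fun i hi => ?_
      have hvi : v ∈ g i := (Finset.mem_filter.1 hi).2
      rw [W, W, ← Finset.mul_prod_erase (g i) (fun q => ε q ω) hvi]
      ring
    -- v-freeness facts
    have hv0 : ∀ i ∈ s₀, v ∉ g i := fun i hi => (Finset.mem_filter.1 hi).2
    have hv1 : ∀ i ∈ s₁, v ∉ g' i := fun i _ => Finset.notMem_erase v (g i)
    -- chaotic representations of products
    have rAA := chaos_mul (μ' := μ') hsq s₀ a g s₀ a g
    have rA3 := (aemul rAA (EventuallyEq.refl _ A)).trans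
      (chaos_mul hsq _ _ _ s₀ a g)
    have rA3B := (aemul rA3 (EventuallyEq.refl _ B)).trans
      (chaos_mul hsq _ _ _ s₁ a g')
    have rAB := chaos_mul (μ' := μ') hsq s₀ a g s₁ a g'
    have rABB := (aemul rAB (EventuallyEq.refl _ B)).trans
      (chaos_mul hsq _ _ _ s₁ a g')
    have rAB3 := (aemul rABB (EventuallyEq.refl _ B)).trans
      (chaos_mul hsq _ _ _ s₁ a g')
    -- integrability
    have mbA : MB μ' A := MB.chaos hm hsq _ _ _
    have mbB : MB μ' B := MB.chaos hm hsq _ _ _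
    have mbε : MB μ' (ε v) := MB.eps hm hsq v
    -- moment identities
    -- second moment identity
    have h1 : ∫ ω, (A ω * B ω) * ε v ω ∂μ' = 0 := by
      refine integral_mul_eps hm hsq hind hzero rAB ?_
      intro q hq
      rw [Finset.mem_product] at hq
      simp [Finset.mem_symmDiff, hv0 q.1 hq.1, hv1 q.2 hq.2]
    have hee : ∀ᵐ ω ∂μ', ε v ω * ε v ω = 1 := by
      filter_upwards [hsq v] with ω hω
      nlinarith
    have mb2 : MB μ' (fun ω => 2 * (A ω * B ω * ε v ω)) :=
      MB.const_mul 2 (((mbA.mul mbB)).mul mbε)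
    have mb3 : MB μ' (fun ω => B ω ^ 2 * (ε v ω * ε v ω)) :=
      (mbB.pow 2).mul (mbε.mul mbε)
    have i2 : ∫ ω, (chaos ε s a g ω)^2 ∂μ'
        = (∫ ω, A ω^2 ∂μ') + ∫ ω, B ω^2 ∂μ' := by
      have e2 : (fun ω => (chaos ε s a g ω)^2)
          = fun ω => A ω^2 + (2*(A ω * B ω * ε v ω) + B ω^2 * (ε v ω * ε v ω)) := by
        funext ω; rw [hS ω]; ring
      rw [e2, integral_add (mbA.pow 2).integrable (mb2.add mb3).integrable,
        integral_add mb2.integrable mb3.integrable, MeasureTheory.integral_const_mul]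
      have h2 : ∫ ω, B ω ^ 2 * (ε v ω * ε v ω) ∂μ' = ∫ ω, B ω ^ 2 ∂μ' := by
        refine integral_congr_ae ?_
        filter_upwards [hee] with ω hω
        rw [hω, mul_one]
      have h1' : ∫ ω, A ω * B ω * ε v ω ∂μ' = 0 := h1
      rw [h1', h2]
      ring
    -- fourth moment identity
    have h4a : ∫ ω, (((A ω * A ω) * A ω) * B ω) * ε v ω ∂μ' = 0 := by
      refine integral_mul_eps hm hsq hind hzero rA3B ?_
      intro q hq
      simp only [Finset.mem_product] at hq
      simp [Finset.mem_symmDiff, hv0 _ hq.1.1.1, hv0 _ hq.1.1.2, hv0 _ hq.1.2, hv1 _ hq.2]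
    have h4b : ∫ ω, (((A ω * B ω) * B ω) * B ω) * ε v ω ∂μ' = 0 := by
      refine integral_mul_eps hm hsq hind hzero rAB3 ?_
      intro q hq
      simp only [Finset.mem_product] at hq
      simp [Finset.mem_symmDiff, hv0 _ hq.1.1.1, hv1 _ hq.1.1.2, hv1 _ hq.1.2, hv1 _ hq.2]
    have mq2 : MB μ' (fun ω => 4*((((A ω * A ω) * A ω) * B ω) * ε v ω)) :=
      MB.const_mul 4 ((((mbA.mul mbA).mul mbA).mul mbB).mul mbε)
    have mq3 : MB μ' (fun ω => 6*(A ω^2 * B ω^2 * (ε v ω * ε v ω))) :=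
      MB.const_mul 6 (((mbA.pow 2).mul (mbB.pow 2)).mul (mbε.mul mbε))
    have mq4 : MB μ' (fun ω => 4*(((((A ω * B ω) * B ω) * B ω) * ε v ω) * (ε v ω * ε v ω))) :=
      MB.const_mul 4 (((((mbA.mul mbB).mul mbB).mul mbB).mul mbε).mul (mbε.mul mbε))
    have mq5 : MB μ' (fun ω => B ω^4 * ((ε v ω * ε v ω) * (ε v ω * ε v ω))) :=
      (mbB.pow 4).mul ((mbε.mul mbε).mul (mbε.mul mbε))
    have i4 : ∫ ω, (chaos ε s a g ω)^4 ∂μ'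
        = (∫ ω, A ω^4 ∂μ') + 6 * (∫ ω, A ω^2 * B ω^2 ∂μ') + ∫ ω, B ω^4 ∂μ' := by
      have e4 : (fun ω => (chaos ε s a g ω)^4)
          = fun ω => A ω^4 + (4*((((A ω * A ω) * A ω) * B ω) * ε v ω)
              + (6*(A ω^2 * B ω^2 * (ε v ω * ε v ω))
              + (4*(((((A ω * B ω) * B ω) * B ω) * ε v ω) * (ε v ω * ε v ω))
              + B ω^4 * ((ε v ω * ε v ω) * (ε v ω * ε v ω))))) := by
        funext ω; rw [hS ω]; ring
      rw [e4, integral_add (mbA.pow 4).integrable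
          (mq2.add (mq3.add (mq4.add mq5))).integrable,
        integral_add mq2.integrable (mq3.add (mq4.add mq5)).integrable,
        integral_add mq3.integrable (mq4.add mq5).integrable,
        integral_add mq4.integrable mq5.integrable,
        MeasureTheory.integral_const_mul, MeasureTheory.integral_const_mul,
        MeasureTheory.integral_const_mul]
      have h4c : ∫ ω, A ω^2 * B ω^2 * (ε v ω * ε v ω) ∂μ' = ∫ ω, A ω^2 * B ω^2 ∂μ' := by
        refine integral_congr_ae ?_
        filter_upwards [hee] with ω hω
        rw [hω, mul_one]
      have h4d : ∫ ω, ((((A ω * B ω) * B ω) * B ω) * ε v ω) * (ε v ω * ε v ω) ∂μ'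
          = ∫ ω, (((A ω * B ω) * B ω) * B ω) * ε v ω ∂μ' := by
        refine integral_congr_ae ?_
        filter_upwards [hee] with ω hω
        rw [hω, mul_one]
      have h4e : ∫ ω, B ω^4 * ((ε v ω * ε v ω) * (ε v ω * ε v ω)) ∂μ' = ∫ ω, B ω^4 ∂μ' := by
        refine integral_congr_ae ?_
        filter_upwards [hee] with ω hω
        rw [hω, one_mul, mul_one]
      rw [h4a, h4c, h4d, h4b, h4e]
      ring
    -- induction hypotheses
    have hsub0 : s₀.sup g ⊆ (s.sup g).erase v := by
      intro q hq
      obtain ⟨i, hi, hq⟩ := Finset.mem_sup.1 hq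
      have his : i ∈ s := (Finset.mem_filter.1 hi).1
      exact Finset.mem_erase.2 ⟨fun h => hv0 i hi (h ▸ hq), Finset.mem_sup.2 ⟨i, his, hq⟩⟩
    have hsub1 : s₁.sup g' ⊆ (s.sup g).erase v := by
      intro q hq
      obtain ⟨i, hi, hq⟩ := Finset.mem_sup.1 hq
      have his : i ∈ s := (Finset.mem_filter.1 hi).1
      have hq' : q ∈ g i := Finset.mem_of_mem_erase hq
      exact Finset.mem_erase.2 ⟨Finset.ne_of_mem_erase hq, Finset.mem_sup.2 ⟨i, his, hq'⟩⟩
    have hcard' : ((s.sup g).erase v).card ≤ n := by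
      rw [Finset.card_erase_of_mem hvV]
      omega
    have hIA : ∫ ω, A ω^4 ∂μ' ≤ 9^(d'+1) * (∫ ω, A ω^2 ∂μ')^2 :=
      IH (d'+1) s₀ a g (fun i hi => hdeg i (Finset.mem_filter.1 hi).1)
        (le_trans (Finset.card_le_card hsub0) hcard')
    have hIB : ∫ ω, B ω^4 ∂μ' ≤ 9^d' * (∫ ω, B ω^2 ∂μ')^2 := by
      refine IH d' s₁ a g' (fun i hi => ?_) (le_trans (Finset.card_le_card hsub1) hcard')
      have hvi : v ∈ g i := (Finset.mem_filter.1 hi).2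
      rw [hg', Finset.card_erase_of_mem hvi]
      have := hdeg i (Finset.mem_filter.1 hi).1
      omega
    -- Cauchy-Schwarz
    have hCS : ∫ ω, A ω^2 * B ω^2 ∂μ'
        ≤ Real.sqrt (∫ ω, A ω^4 ∂μ') * Real.sqrt (∫ ω, B ω^4 ∂μ') := by
      have := cauchy_schwarz (mbA.pow 2) (mbB.pow 2)
        (fun ω => sq_nonneg _) (fun ω => sq_nonneg _)
      have eA : (fun ω => (A ω^2)^2) = fun ω => A ω^4 := funext fun ω => by ring
      have eB : (fun ω => (B ω^2)^2) = fun ω => B ω^4 := funext fun ω => by ring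
      rwa [show (∫ ω, (A ω^2)^2 ∂μ') = ∫ ω, A ω^4 ∂μ' from by rw [eA],
        show (∫ ω, (B ω^2)^2 ∂μ') = ∫ ω, B ω^4 ∂μ' from by rw [eB]] at this
    -- nonnegativity
    have hα2 : 0 ≤ ∫ ω, A ω^2 ∂μ' := integral_nonneg fun ω => sq_nonneg _
    have hβ2 : 0 ≤ ∫ ω, B ω^2 ∂μ' := integral_nonneg fun ω => sq_nonneg _
    have h3p : (0:ℝ) ≤ 3^d' := by positivity
    -- sqrt computations
    have hsA : Real.sqrt (∫ ω, A ω^4 ∂μ') ≤ 3^(d'+1) * (∫ ω, A ω^2 ∂μ') := by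
      have : (9:ℝ)^(d'+1) * (∫ ω, A ω^2 ∂μ')^2 = (3^(d'+1) * (∫ ω, A ω^2 ∂μ'))^2 := by
        rw [mul_pow, ← pow_right_comm]
        norm_num
      calc Real.sqrt (∫ ω, A ω^4 ∂μ') ≤ Real.sqrt ((3^(d'+1) * (∫ ω, A ω^2 ∂μ'))^2) :=
            Real.sqrt_le_sqrt (by rw [← this]; exact hIA)
        _ = 3^(d'+1) * (∫ ω, A ω^2 ∂μ') := Real.sqrt_sq (by positivity)
    have hsB : Real.sqrt (∫ ω, B ω^4 ∂μ') ≤ 3^d' * (∫ ω, B ω^2 ∂μ') := by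
      have : (9:ℝ)^d' * (∫ ω, B ω^2 ∂μ')^2 = (3^d' * (∫ ω, B ω^2 ∂μ'))^2 := by
        rw [mul_pow, ← pow_right_comm]
        norm_num
      calc Real.sqrt (∫ ω, B ω^4 ∂μ') ≤ Real.sqrt ((3^d' * (∫ ω, B ω^2 ∂μ'))^2) :=
            Real.sqrt_le_sqrt (by rw [← this]; exact hIB)
        _ = 3^d' * (∫ ω, B ω^2 ∂μ') := Real.sqrt_sq (by positivity)
    have hm22 : ∫ ω, A ω^2 * B ω^2 ∂μ'
        ≤ (3^(d'+1) * (∫ ω, A ω^2 ∂μ')) * (3^d' * (∫ ω, B ω^2 ∂μ')) := by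
      refine le_trans hCS (mul_le_mul hsA hsB (Real.sqrt_nonneg _) (by positivity))
    -- conclude
    rw [i4, i2]
    have h91 : (9:ℝ)^(d'+1) = 9 * (3^d' * 3^d') := by
      rw [pow_succ, ← mul_pow]; norm_num; ring
    have h90 : (9:ℝ)^d' = 3^d' * 3^d' := by
      rw [← mul_pow]; norm_num
    have h31 : (3:ℝ)^(d'+1) = 3 * 3^d' := by rw [pow_succ]; ring
    rw [h91]
    rw [h91] at hIA
    rw [h31] at hm22
    rw [h90] at hIB
    nlinarith [mul_nonneg (mul_nonneg h3p h3p) (mul_nonneg hβ2 hβ2),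
      mul_nonneg (mul_nonneg h3p h3p) (mul_nonneg hα2 hβ2)]


lemma integral_chaos_sq (hm : ∀ p, Measurable (ε p)) (hsq : ∀ p, ∀ᵐ ω ∂μ', ε p ω ^ 2 = 1)
    (hind : iIndepFun ε μ') (hzero : ∀ p, ∫ ω, ε p ω ∂μ' = 0)
    (s : Finset κ) (a : κ → ℝ) (g : κ → Finset ι) :
    ∫ ω, (chaos ε s a g ω)^2 ∂μ'
      = ∑ q ∈ s ×ˢ s, a q.1 * a q.2 * (if g q.1 = g q.2 then 1 else 0) := by
  have e : (fun ω => (chaos ε s a g ω)^2)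
      =ᵐ[μ'] chaos ε (s ×ˢ s) (fun q => a q.1 * a q.2) (fun q => g q.1 ∆ g q.2) := by
    refine EventuallyEq.trans (EventuallyEq.of_eq (funext fun ω => sq (chaos ε s a g ω)))
      (chaos_mul hsq s a g s a g)
  rw [integral_congr_ae e, integral_chaos hm hsq hind hzero]
  refine Finset.sum_congr rfl fun q _ => ?_
  have hiff : (g q.1 ∆ g q.2 = ∅) ↔ g q.1 = g q.2 := by
    rw [← Finset.bot_eq_empty, symmDiff_eq_bot]
  rw [if_congr hiff rfl rfl]

/-- Paley–Zygmund inequality from a fourth-moment bound. -/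
lemma paley_zygmund {S : Ω' → ℝ} (hmb : MB μ' S) {K : ℝ} (hK : 1 ≤ K)
    (h4 : ∫ ω, S ω^4 ∂μ' ≤ K * (∫ ω, S ω^2 ∂μ')^2)
    (h2 : 0 < ∫ ω, S ω^2 ∂μ') :
    9/(16*K) ≤ (μ' {ω | Real.sqrt (∫ ω', S ω'^2 ∂μ') / 2 ≤ |S ω|}).toReal := by
  set m2 := ∫ ω', S ω'^2 ∂μ' with hm2
  set Es := {ω | Real.sqrt m2 / 2 ≤ |S ω|} with hEs
  have hK0 : (0:ℝ) < K := lt_of_lt_of_le one_pos hK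
  have hEm : MeasurableSet Es := measurableSet_le measurable_const hmb.1.abs
  have hint2 : Integrable (fun ω => S ω^2) μ' := (hmb.pow 2).integrable
  have hsplit : m2 = (∫ ω in Es, S ω^2 ∂μ') + ∫ ω in Esᶜ, S ω^2 ∂μ' :=
    (integral_add_compl hEm hint2).symm
  have hcomp : ∫ ω in Esᶜ, S ω^2 ∂μ' ≤ m2/4 := by
    have hb : ∀ ω ∈ Esᶜ, S ω^2 ≤ m2/4 := by
      intro ω hω
      simp only [hEs, Set.mem_compl_iff, Set.mem_setOf_eq, not_le] at hω
      nlinarith [abs_nonneg (S ω), Real.sq_sqrt h2.le, sq_abs (S ω), Real.sqrt_nonneg m2]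
    calc ∫ ω in Esᶜ, S ω^2 ∂μ' ≤ ∫ _ω in Esᶜ, m2/4 ∂μ' :=
          setIntegral_mono_on hint2.integrableOn (integrableOn_const (measure_ne_top _ _))
            hEm.compl hb
      _ = (μ' Esᶜ).toReal * (m2/4) := by rw [setIntegral_const, smul_eq_mul, measureReal_def]
      _ ≤ 1 * (m2/4) := by
          refine mul_le_mul_of_nonneg_right ?_ (by positivity)
          rw [show (1:ℝ) = (μ' Set.univ).toReal by simp]
          exact ENNReal.toReal_mono (measure_ne_top _ _) (measure_mono (Set.subset_univ _))
      _ = m2/4 := one_mul _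
  have hindf : (fun ω => S ω^2 * Es.indicator (fun _ => (1:ℝ)) ω)
      = Es.indicator (fun ω => S ω^2) := by
    funext ω
    by_cases hw : ω ∈ Es <;> simp [hw]
  have hEpart : ∫ ω in Es, S ω^2 ∂μ'
      ≤ Real.sqrt (∫ ω, S ω^4 ∂μ') * Real.sqrt ((μ' Es).toReal) := by
    have mbi : MB μ' (Es.indicator (fun _ => (1:ℝ))) := by
      refine ⟨measurable_const.indicator hEm, 1, ae_of_all _ fun ω => ?_⟩
      by_cases hw : ω ∈ Es <;> simp [hw]
    have hcs := cauchy_schwarz (hmb.pow 2) mbi (fun ω => sq_nonneg _)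
      (fun ω => Set.indicator_nonneg (fun _ _ => zero_le_one) ω)
    rw [hindf] at hcs
    rw [integral_indicator hEm] at hcs
    have e1 : ∫ ω, (S ω^2)^2 ∂μ' = ∫ ω, S ω^4 ∂μ' := by
      refine integral_congr_ae (ae_of_all _ fun ω => by ring)
    have e2 : ∫ ω, (Es.indicator (fun _ => (1:ℝ)) ω)^2 ∂μ' = (μ' Es).toReal := by
      have : (fun ω => (Es.indicator (fun _ => (1:ℝ)) ω)^2) = Es.indicator (fun _ => (1:ℝ)) := by
        funext ω
        by_cases hw : ω ∈ Es <;> simp [hw]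
      rw [this, integral_indicator hEm, setIntegral_const, smul_eq_mul, mul_one, measureReal_def]
    rw [e1, e2] at hcs
    exact hcs
  have hs4 : Real.sqrt (∫ ω, S ω^4 ∂μ') ≤ Real.sqrt K * m2 := by
    calc Real.sqrt (∫ ω, S ω^4 ∂μ') ≤ Real.sqrt (K * m2^2) := Real.sqrt_le_sqrt h4
      _ = Real.sqrt K * m2 := by
          rw [Real.sqrt_mul hK0.le, Real.sqrt_sq h2.le]
  have hP0 : (0:ℝ) ≤ (μ' Es).toReal := ENNReal.toReal_nonneg
  have h34 : 3/4 * m2 ≤ (Real.sqrt K * Real.sqrt ((μ' Es).toReal)) * m2 := by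
    have : m2 ≤ Real.sqrt K * m2 * Real.sqrt ((μ' Es).toReal) + m2/4 := by
      calc m2 = (∫ ω in Es, S ω^2 ∂μ') + ∫ ω in Esᶜ, S ω^2 ∂μ' := hsplit
        _ ≤ Real.sqrt (∫ ω, S ω^4 ∂μ') * Real.sqrt ((μ' Es).toReal) + m2/4 :=
            add_le_add hEpart hcomp
        _ ≤ Real.sqrt K * m2 * Real.sqrt ((μ' Es).toReal) + m2/4 := by
            refine add_le_add (mul_le_mul_of_nonneg_right hs4 (Real.sqrt_nonneg _)) le_rfl
    nlinarith
  have h34' : 3/4 ≤ Real.sqrt K * Real.sqrt ((μ' Es).toReal) :=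
    le_of_mul_le_mul_right (by linarith [h34]) h2
  have h916 : 9/16 ≤ K * (μ' Es).toReal := by
    nlinarith [Real.sq_sqrt hK0.le, Real.sq_sqrt hP0, Real.sqrt_nonneg K,
      Real.sqrt_nonneg ((μ' Es).toReal)]
  rw [div_le_iff₀ (by positivity)]
  linarith

end SecAux

section PermLemma

lemma exists_perm_of_image_eq {d : ℕ} {i j : Fin d → ℕ+} (hi : Function.Injective i)
    (hj : Function.Injective j)
    (hij : Finset.image i Finset.univ = Finset.image j Finset.univ) :
    ∃ σ : Equiv.Perm (Fin d), i ∘ σ = j := by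
  have hr : Set.range i = Set.range j := by
    rw [← Set.image_univ, ← Set.image_univ, ← Finset.coe_univ, ← Finset.coe_image,
      ← Finset.coe_image, hij]
  refine ⟨(Equiv.ofInjective j hj).trans
    ((Equiv.setCongr hr.symm).trans (Equiv.ofInjective i hi).symm), funext fun l => ?_⟩
  simp only [Function.comp_apply, Equiv.trans_apply]
  rw [Equiv.apply_ofInjective_symm hi]
  rfl

end PermLemma

instance sectorFilter.isCountablyGenerated (d : ℕ) (θ : ℝ) :
    (sectorFilter d θ).IsCountablyGenerated := by
  rw [sectorFilter]
  infer_instance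

namespace SecAux

lemma secIdx_inj {d : ℕ} {θ : ℝ} {n i : Fin d → ℕ+} (hi : i ∈ secIdx d θ n) :
    Function.Injective i := by
  classical
  exact (Finset.mem_filter.1 hi).2.2

/-- The key lemma: a.s. sectorial convergence of the chaos implies convergence
of the normalized sums of squares, for deterministic symmetric coefficients. -/
lemma key {Ω' : Type*} [MeasurableSpace Ω'] {μ' : Measure Ω'} [IsProbabilityMeasure μ']
    (d : ℕ) (θ : ℝ) (γ : (Fin d → ℕ+) → ℝ) (hγpos : ∀ n, 0 < γ n)
    (ε : ℕ+ → Ω' → ℝ) (hm : ∀ p, Measurable (ε p))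
    (hsq : ∀ p, ∀ᵐ ω ∂μ', ε p ω ^ 2 = 1)
    (hind : iIndepFun ε μ')
    (hzero : ∀ p, ∫ ω, ε p ω ∂μ' = 0)
    (a : (Fin d → ℕ+) → ℝ)
    (hsa : ∀ (σ : Equiv.Perm (Fin d)) (i : Fin d → ℕ+), a (i ∘ σ) = a i)
    (hae : ∀ᵐ ω ∂μ', Tendsto
      (fun n => (∑ i ∈ secIdx d θ n, (∏ l, ε (i l) ω) * a i) / γ n)
      (sectorFilter d θ) (𝓝 0)) :
    Tendsto (fun n => (∑ i ∈ secIdx d θ n, (a i)^2) / (γ n)^2)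
      (sectorFilter d θ) (𝓝 0) := by
  classical
  set gg : (Fin d → ℕ+) → Finset ℕ+ := fun i => Finset.image i Finset.univ with hgg
  -- chaos representation of the random sums
  have hrep : ∀ n, (fun ω => ∑ i ∈ secIdx d θ n, (∏ l, ε (i l) ω) * a i)
      = chaos ε (secIdx d θ n) a gg := by
    intro n
    funext ω
    refine Finset.sum_congr rfl fun i hi => ?_
    have hinj : Function.Injective i := secIdx_inj hi
    have : W ε (gg i) ω = ∏ l, ε (i l) ω := by
      rw [hgg, W, Finset.prod_image (fun x _ y _ hxy => hinj hxy)]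
    rw [this, mul_comm]
  -- second-moment lower bound
  have hSM : ∀ n, (∑ i ∈ secIdx d θ n, (a i)^2)
      ≤ ∫ ω, (chaos ε (secIdx d θ n) a gg ω)^2 ∂μ' := by
    intro n
    rw [integral_chaos_sq hm hsq hind hzero, Finset.sum_product]
    refine Finset.sum_le_sum fun i hi => ?_
    have hterm : ∀ j ∈ secIdx d θ n, 0 ≤ a i * a j * (if gg i = gg j then 1 else 0) := by
      intro j hj
      by_cases hgij : gg i = gg j
      · obtain ⟨σ, hσ⟩ := exists_perm_of_image_eq (secIdx_inj hi) (secIdx_inj hj) hgij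
        have : a j = a i := by rw [← hσ, hsa]
        rw [if_pos hgij, this, mul_one]
        exact mul_self_nonneg _
      · rw [if_neg hgij, mul_zero]
    have := Finset.single_le_sum hterm hi
    rw [if_pos rfl, mul_one] at this
    calc (a i)^2 = a i * a i := sq (a i)
      _ ≤ _ := this
  -- contradiction setup
  by_contra hcon
  rw [tendsto_iff_seq_tendsto] at hcon
  push_neg at hcon
  obtain ⟨u, hu, hnotu⟩ := hcon
  rw [Metric.tendsto_atTop] at hnotu
  push_neg at hnotu
  obtain ⟨δ, hδ, hfreq⟩ := hnotu
  obtain ⟨φ, hφmono, hφP⟩ := extraction_of_frequently_atTop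
    (P := fun k => δ ≤ dist ((∑ i ∈ secIdx d θ (u k), (a i)^2) / (γ (u k))^2) 0)
    (frequently_atTop'.2 fun N => by
      obtain ⟨n, hn1, hn2⟩ := hfreq (N+1)
      exact ⟨n, by omega, hn2⟩)
  set nseq : ℕ → (Fin d → ℕ+) := fun k => u (φ k) with hnseq
  have hnseqt : Tendsto nseq atTop (sectorFilter d θ) := hu.comp hφmono.tendsto_atTop
  have hTlow : ∀ k, δ * (γ (nseq k))^2 ≤ ∑ i ∈ secIdx d θ (nseq k), (a i)^2 := by
    intro k
    have h1 := hφP k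
    rw [Real.dist_0_eq_abs, abs_of_nonneg
      (div_nonneg (Finset.sum_nonneg fun i _ => sq_nonneg _) (sq_nonneg _))] at h1
    have hγ2 : (0:ℝ) < (γ (nseq k))^2 := pow_pos (hγpos _) 2
    calc δ * (γ (nseq k))^2
        ≤ ((∑ i ∈ secIdx d θ (nseq k), (a i)^2) / (γ (nseq k))^2) * (γ (nseq k))^2 :=
          mul_le_mul_of_nonneg_right h1 hγ2.le
      _ = ∑ i ∈ secIdx d θ (nseq k), (a i)^2 := div_mul_cancel₀ _ hγ2.ne'
  -- Paley–Zygmund lower bound on measures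
  set c : ℝ := 9/(16 * 9^d) with hc
  have hcpos : 0 < c := by positivity
  set Dset : ℕ → Set Ω' := fun k =>
    {ω | Real.sqrt δ / 2 * γ (nseq k) ≤ |chaos ε (secIdx d θ (nseq k)) a gg ω|} with hDset
  have hDm : ∀ k, MeasurableSet (Dset k) := fun k =>
    measurableSet_le measurable_const (chaos_meas hm _ _ _).abs
  have hDlow : ∀ k, c ≤ (μ' (Dset k)).toReal := by
    intro k
    set Sk := chaos ε (secIdx d θ (nseq k)) a gg with hSk
    have hm2low : δ * (γ (nseq k))^2 ≤ ∫ ω, Sk ω^2 ∂μ' := le_trans (hTlow k) (hSM _)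
    have hm2pos : 0 < ∫ ω, Sk ω^2 ∂μ' :=
      lt_of_lt_of_le (mul_pos hδ (pow_pos (hγpos _) 2)) hm2low
    have hdeg : ∀ i ∈ secIdx d θ (nseq k), (gg i).card ≤ d := by
      intro i _
      calc (gg i).card ≤ Finset.univ.card := Finset.card_image_le
        _ = d := by simp
    have h4 := bonami hm hsq hind hzero ((secIdx d θ (nseq k)).sup gg).card d
      (secIdx d θ (nseq k)) a gg hdeg le_rfl
    have hK : (1:ℝ) ≤ 9^d := one_le_pow₀ (by norm_num)
    have hpz := paley_zygmund (MB.chaos hm hsq _ _ _) hK h4 hm2pos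
    have hsub : {ω | Real.sqrt (∫ ω', Sk ω'^2 ∂μ') / 2 ≤ |Sk ω|} ⊆ Dset k := by
      intro ω hω
      simp only [Set.mem_setOf_eq] at hω ⊢
      refine le_trans ?_ hω
      have h1 : Real.sqrt δ * γ (nseq k) = Real.sqrt (δ * (γ (nseq k))^2) := by
        rw [Real.sqrt_mul hδ.le, Real.sqrt_sq (hγpos _).le]
      have h2 : Real.sqrt (δ * (γ (nseq k))^2) ≤ Real.sqrt (∫ ω', Sk ω'^2 ∂μ') :=
        Real.sqrt_le_sqrt hm2low
      rw [div_mul_eq_mul_div, h1]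
      linarith
    calc c = 9/(16 * 9^d) := hc
      _ ≤ (μ' {ω | Real.sqrt (∫ ω', Sk ω'^2 ∂μ') / 2 ≤ |Sk ω|}).toReal := hpz
      _ ≤ (μ' (Dset k)).toReal :=
          ENNReal.toReal_mono (measure_ne_top _ _) (measure_mono hsub)
  -- dominated convergence
  have hDtend : Tendsto (fun k => ∫ ω, (Dset k).indicator (fun _ => (1:ℝ)) ω ∂μ')
      atTop (𝓝 (∫ _ω, (0:ℝ) ∂μ')) := by
    refine tendsto_integral_of_dominated_convergence (fun _ => (1:ℝ))
      (fun k => (measurable_const.indicator (hDm k)).aestronglyMeasurable)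
      (integrable_const 1) (fun k => ae_of_all _ fun ω => ?_) ?_
    · by_cases hw : ω ∈ Dset k <;> simp [hw]
    · filter_upwards [hae] with ω hω
      have hcomp : Tendsto
          (fun k => (∑ i ∈ secIdx d θ (nseq k), (∏ l, ε (i l) ω) * a i) / γ (nseq k))
          atTop (𝓝 0) := hω.comp hnseqt
      rw [Metric.tendsto_atTop] at hcomp
      obtain ⟨N, hN⟩ := hcomp (Real.sqrt δ / 2) (by positivity)
      refine Tendsto.congr' ?_ tendsto_const_nhds
      rw [Filter.EventuallyEq, eventually_atTop]
      refine ⟨N, fun k hk => ?_⟩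
      have h1 := hN k hk
      rw [Real.dist_0_eq_abs] at h1
      have hnot : ω ∉ Dset k := by
        simp only [hDset, Set.mem_setOf_eq, not_le]
        have hγp := hγpos (nseq k)
        have h2 : |chaos ε (secIdx d θ (nseq k)) a gg ω| / γ (nseq k) < Real.sqrt δ / 2 := by
          rw [← abs_of_pos hγp, ← abs_div, ← hrep (nseq k)]
          exact h1
        calc |chaos ε (secIdx d θ (nseq k)) a gg ω|
            = |chaos ε (secIdx d θ (nseq k)) a gg ω| / γ (nseq k) * γ (nseq k) :=
              (div_mul_cancel₀ _ hγp.ne').symm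
          _ < Real.sqrt δ / 2 * γ (nseq k) :=
              mul_lt_mul_of_pos_right h2 hγp
      simp [hnot]
  have hint : ∀ k, ∫ ω, (Dset k).indicator (fun _ => (1:ℝ)) ω ∂μ' = (μ' (Dset k)).toReal := by
    intro k
    rw [integral_indicator (hDm k), setIntegral_const, smul_eq_mul, mul_one, measureReal_def]
  rw [integral_zero] at hDtend
  have : c ≤ 0 := by
    refine ge_of_tendsto' hDtend fun k => ?_
    rw [hint k]
    exact hDlow k
  linarith

end SecAux

namespace SecAux

/-- Rademacher laws give mean zero and a.e. squared one. -/
lemma rademacher_props {Ω' : Type*} [MeasurableSpace Ω'] {μ' : Measure Ω'}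
    [IsProbabilityMeasure μ'] {f : Ω' → ℝ} (hf : Measurable f)
    (h1 : μ' {ω | f ω = 1} = 1/2) (h2 : μ' {ω | f ω = -1} = 1/2) :
    (∀ᵐ ω ∂μ', f ω ^ 2 = 1) ∧ ∫ ω, f ω ∂μ' = 0 := by
  set A := {ω | f ω = 1} with hA
  set B := {ω | f ω = -1} with hB
  have hAm : MeasurableSet A := hf (measurableSet_singleton 1)
  have hBm : MeasurableSet B := hf (measurableSet_singleton (-1))
  have hdisj : Disjoint A B := by
    rw [Set.disjoint_left]
    intro ω hω1 hω2
    rw [hA, Set.mem_setOf_eq] at hω1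
    rw [hB, Set.mem_setOf_eq] at hω2
    rw [hω1] at hω2
    norm_num at hω2
  have hUn : μ' (A ∪ B) = 1 := by
    rw [measure_union hdisj hBm, h1, h2]
    rw [ENNReal.div_add_div_same]
    norm_num
    rw [ENNReal.div_self (by norm_num) (by norm_num)]
  have hcompl : μ' (A ∪ B)ᶜ = 0 := by
    rw [measure_compl (hAm.union hBm) (measure_ne_top _ _), hUn, measure_univ, tsub_self]
  have haemem : ∀ᵐ ω ∂μ', ω ∈ A ∪ B := by
    rw [ae_iff]
    convert hcompl using 2
    rfl
  constructor
  · filter_upwards [haemem] with ω hω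
    rcases hω with hω | hω
    · rw [hA, Set.mem_setOf_eq] at hω; rw [hω]; norm_num
    · rw [hB, Set.mem_setOf_eq] at hω; rw [hω]; norm_num
  · have hfe : f =ᵐ[μ'] fun ω => A.indicator (fun _ => (1:ℝ)) ω + B.indicator (fun _ => (-1:ℝ)) ω := by
      filter_upwards [haemem] with ω hω
      rcases hω with hω | hω
      · have h1' : f ω = 1 := hω
        have : ω ∉ B := by
          rw [hB, Set.mem_setOf_eq, h1']; norm_num
        simp [Set.indicator_of_mem hω, Set.indicator_of_notMem this, h1']
      · have h1' : f ω = -1 := hω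
        have : ω ∉ A := by
          rw [hA, Set.mem_setOf_eq, h1']; norm_num
        simp [Set.indicator_of_mem hω, Set.indicator_of_notMem this, h1']
    rw [integral_congr_ae hfe, integral_add
      ((integrable_const (1:ℝ)).indicator hAm) ((integrable_const (-1:ℝ)).indicator hBm),
      integral_indicator_const _ hAm, integral_indicator_const _ hBm, measureReal_def, measureReal_def, h1, h2]
    have : ((1:ℝ≥0∞)/2).toReal = 1/2 := by
      rw [ENNReal.toReal_div]
      norm_num
    rw [this]
    norm_num

/-- Independence of the coordinate process under the pushforward law. -/
lemma iIndep_map_pi {Ω : Type*} [MeasurableSpace Ω] (μ : Measure Ω) [IsProbabilityMeasure μ]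
    (e : ℕ+ → Ω → ℝ) (hem : ∀ i, Measurable (e i))
    (heind : iIndepFun e μ) :
    iIndepFun
      (fun p (y : ℕ+ → ℝ) => y p) (μ.map (fun ω p => e p ω)) := by
  have hevm : Measurable (fun ω (p : ℕ+) => e p ω) := measurable_pi_lambda _ hem
  rw [iIndepFun_iff_measure_inter_preimage_eq_mul]
  intro S sets hsets
  have hpre : (fun ω (p : ℕ+) => e p ω) ⁻¹' (⋂ i ∈ S, (fun y : ℕ+ → ℝ => y i) ⁻¹' sets i)
      = ⋂ i ∈ S, e i ⁻¹' sets i := by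
    ext ω
    simp [Set.mem_iInter]
  have hms : MeasurableSet (⋂ i ∈ S, (fun y : ℕ+ → ℝ => y i) ⁻¹' sets i) :=
    MeasurableSet.biInter S.countable_toSet fun i hi => (measurable_pi_apply i) (hsets i hi)
  rw [Measure.map_apply hevm hms, hpre,
    (iIndepFun_iff_measure_inter_preimage_eq_mul.1 heind) S hsets]
  refine Finset.prod_congr rfl fun i hi => ?_
  rw [Measure.map_apply hevm ((measurable_pi_apply i) (hsets i hi))]
  rfl

end SecAux


open SecAux in
/-- (2.8) implies (2.10): sectorial a.s. convergence of the symmetrized U-statistic implies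
sectorial a.s. convergence of the normalized sum of squares. -/
theorem sectorial_U_statistic_implies_squares
{E Ω : Type*} [MeasurableSpace E] [MeasurableSpace Ω]
    (μ : Measure Ω) [IsProbabilityMeasure μ]
    (d : ℕ) (hd : 1 ≤ d) (θ : ℝ) (hθ0 : 0 < θ) (hθ1 : θ < 1)
(X : ℕ+ → Ω → E) (hXm : ∀ i, Measurable (X i))
    (hXind : iIndepFun X μ)
    (hXid : ∀ i j : ℕ+, IdentDistrib (X i) (X j) μ μ)
    (e : ℕ+ → Ω → ℝ) (hem : ∀ i, Measurable (e i))
    (heind : iIndepFun e μ)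
    (heRad : ∀ i : ℕ+, μ {ω | e i ω = 1} = 1/2 ∧ μ {ω | e i ω = -1} = 1/2)
    (hXe : IndepFun (fun ω (i : ℕ+) => X i ω) (fun ω (i : ℕ+) => e i ω) μ)
(h : (Fin d → E) → ℝ) (hhm : Measurable h)
    (hsym : ∀ (σ : Equiv.Perm (Fin d)) (x : Fin d → E), h (x ∘ σ) = h x)
(γ : (Fin d → ℕ+) → ℝ) (hγpos : ∀ n, 0 < γ n) (hγmono : Monotone γ)
    (C : ℝ) (hC : 0 < C) (hγdbl : ∀ n, γ (fun j => 2 * n j) ≤ C * γ n)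
    (hγ3 : ∀ l : ℕ, 1 ≤ l →
      (∑' k : ℕ, (2 : ℝ) ^ (d * (l + k)) / (γ (diag d (2 ^ (l + k)))) ^ 2)
        ≤ C * (2 : ℝ) ^ (d * l) / (γ (diag d (2 ^ l))) ^ 2)
    (h28 : (∀ᵐ ω ∂μ, Tendsto
        (fun n => (∑ i ∈ secIdx d θ n, (∏ l, e (i l) ω) * h fun l => X (i l) ω) / γ n)
        (sectorFilter d θ) (𝓝 0))) :
    (∀ᵐ ω ∂μ, Tendsto
        (fun n => (∑ i ∈ secIdx d θ n, (h fun l => X (i l) ω) ^ 2) / (γ n) ^ 2)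
        (sectorFilter d θ) (𝓝 0)) := by
  classical
  set Xv : Ω → (ℕ+ → E) := fun ω i => X i ω with hXv
  set ev : Ω → (ℕ+ → ℝ) := fun ω i => e i ω with hev
  have hXvm : Measurable Xv := measurable_pi_lambda _ hXm
  have hevm : Measurable ev := measurable_pi_lambda _ hem
  set Φ : Ω → (ℕ+ → E) × (ℕ+ → ℝ) := fun ω => (Xv ω, ev ω) with hΦ
  have hΦm : Measurable Φ := hXvm.prodMk hevm
  set νX := μ.map Xv with hνX
  set νe := μ.map ev with hνe
  haveI : IsProbabilityMeasure νX := Measure.isProbabilityMeasure_map hXvm.aemeasurable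
  haveI : IsProbabilityMeasure νe := Measure.isProbabilityMeasure_map hevm.aemeasurable
  have hprod : μ.map Φ = νX.prod νe :=
    (indepFun_iff_map_prod_eq_prod_map_map hXvm.aemeasurable hevm.aemeasurable).1 hXe
  -- the statistic as a function on the canonical space
  set ST : ((ℕ+ → E) × (ℕ+ → ℝ)) → (Fin d → ℕ+) → ℝ := fun z n =>
    (∑ i ∈ secIdx d θ n, (∏ l, z.2 (i l)) * h (fun l => z.1 (i l))) / γ n with hSTdef
  have hSTm : ∀ n, Measurable (fun z => ST z n) := by
    intro n
    apply Measurable.div_const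
    refine Finset.measurable_sum _ fun i _ => Measurable.mul ?_ ?_
    · exact Finset.measurable_prod _ fun l _ => (measurable_pi_apply (i l)).comp measurable_snd
    · exact hhm.comp (measurable_pi_lambda _ fun l => (measurable_pi_apply (i l)).comp measurable_fst)
  -- measurable set of convergence
  obtain ⟨B, hB⟩ := (sectorFilter d θ).exists_antitone_basis
  set G : Set ((ℕ+ → E) × (ℕ+ → ℝ)) := {z | Tendsto (ST z) (sectorFilter d θ) (𝓝 0)} with hG
  have hGiff : ∀ z, z ∈ G ↔ ∀ m : ℕ, ∃ j : ℕ, ∀ n ∈ B j, |ST z n| < 1/(m+1) := by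
    intro z
    constructor
    · intro hz m
      have h1 := hz (Metric.ball_mem_nhds (0:ℝ) (show (0:ℝ) < 1/(m+1) by positivity))
      have hmem : {n | |ST z n| < 1/(m+1)} ∈ sectorFilter d θ := by
        refine Filter.mem_of_superset h1 fun n hn => ?_
        simpa [Real.dist_0_eq_abs] using hn
      obtain ⟨j, -, hj⟩ := hB.toHasBasis.mem_iff.1 hmem
      exact ⟨j, fun n hn => hj hn⟩
    · intro hz
      rw [hG, Set.mem_setOf_eq, Metric.tendsto_nhds]
      intro ε' hε'
      obtain ⟨m, hm⟩ := exists_nat_one_div_lt hε'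
      obtain ⟨j, hj⟩ := hz m
      have hBj : B j ∈ sectorFilter d θ := hB.toHasBasis.mem_of_mem trivial
      refine Filter.mem_of_superset hBj fun n hn => ?_
      rw [Set.mem_setOf_eq, Real.dist_0_eq_abs]
      exact lt_trans (hj n hn) hm
  have hGm : MeasurableSet G := by
    have hGeq : G = ⋂ m : ℕ, ⋃ j : ℕ, ⋂ n ∈ B j, {z | |ST z n| < 1/(m+1)} := by
      ext z
      simp only [Set.mem_iInter, Set.mem_iUnion, Set.mem_setOf_eq]
      exact hGiff z
    rw [hGeq]
    refine MeasurableSet.iInter fun m => MeasurableSet.iUnion fun j =>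
      MeasurableSet.biInter (Set.to_countable _) fun n _ => ?_
    exact measurableSet_lt ((hSTm n).abs) measurable_const
  -- transfer (2.8) to the product space
  have h28' : ∀ᵐ z ∂(νX.prod νe), z ∈ G := by
    rw [← hprod]
    exact (ae_map_iff (p := fun z => z ∈ G) hΦm.aemeasurable hGm).2 h28
  have hsec : ∀ᵐ x ∂νX, ∀ᵐ y ∂νe, (x, y) ∈ G := by
    have h0 : (νX.prod νe) Gᶜ = 0 := by
      rw [Set.compl_def]
      exact ae_iff.1 h28'
    have hsect := (Measure.measure_prod_null hGm.compl).1 h0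
    refine hsect.mono fun x hx => ?_
    rw [ae_iff]
    convert hx using 2
    all_goals rfl
  -- coordinate process properties under νe
  have hπm : ∀ p : ℕ+, Measurable (fun y : ℕ+ → ℝ => y p) := fun p => measurable_pi_apply p
  have hπind : iIndepFun (fun p (y : ℕ+ → ℝ) => y p) νe :=
    iIndep_map_pi μ e hem heind
  have hπrad : ∀ p : ℕ+, (∀ᵐ y ∂νe, (y p)^2 = 1) ∧ ∫ y, y p ∂νe = 0 := by
    intro p
    have hs1 : MeasurableSet {y : ℕ+ → ℝ | y p = 1} := (hπm p) (measurableSet_singleton 1)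
    have hs2 : MeasurableSet {y : ℕ+ → ℝ | y p = -1} := (hπm p) (measurableSet_singleton (-1))
    have h1 : νe {y | y p = 1} = 1/2 := by
      rw [hνe, Measure.map_apply hevm hs1]
      exact (heRad p).1
    have h2 : νe {y | y p = -1} = 1/2 := by
      rw [hνe, Measure.map_apply hevm hs2]
      exact (heRad p).2
    exact rademacher_props (hπm p) h1 h2
  -- per-x application of the key lemma
  have hmain : ∀ᵐ x ∂νX, Tendsto
      (fun n => (∑ i ∈ secIdx d θ n, (h (fun l => x (i l)))^2) / (γ n)^2)
      (sectorFilter d θ) (𝓝 0) := by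
    refine hsec.mono fun x hx => ?_
    have := key d θ γ hγpos (fun p (y : ℕ+ → ℝ) => y p) hπm (fun p => (hπrad p).1) hπind
      (fun p => (hπrad p).2) (fun i => h (fun l => x (i l)))
      (fun σ i => hsym σ (fun l => x (i l)))
      (by
        refine hx.mono fun y hy => ?_
        have hyG : Tendsto (ST (x, y)) (sectorFilter d θ) (𝓝 0) := hy
        refine hyG.congr fun n => ?_
        rfl)
    exact this
  exact ae_of_ae_map hXvm.aemeasurable hmain
end
end

section
/- If (1/γ_n²) Σ_{i ≤ n, i ∈ S_θ^d} h²(X_i^dec) → 0 almost surely as n → ∞ in the sector S_θ^d, then (1/γ_(n,…,n)²) Σ_{i ≤ (n,…,n)} h²(X_i^dec) → 0 almost surely as n → ∞ in ℤ_+ (i.e., diagonal convergence of the normalized decoupled sum of squares holds over the full cube {i ≤ (n,…,n)}). -/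
open MeasureTheory ProbabilityTheory Filter Finset
open scoped Topology ENNReal

noncomputable section

section AuxLemmas

variable {Ω E ι : Type*} [MeasurableSpace Ω] [MeasurableSpace E]
  {μ : Measure Ω} [IsProbabilityMeasure μ] {X : ι → Ω → E}

private lemma aux_map_tuple_eq_pi {κ : Type*} [Fintype κ]
    (hXm : ∀ p, Measurable (X p))
    (hind : iIndepFun X μ)
    {J : κ → ι} (hJ : Function.Injective J) :
    Measure.map (fun ω (k : κ) => X (J k) ω) μ
      = Measure.pi (fun k => Measure.map (X (J k)) μ) := by
  classical
  refine (Measure.pi_eq fun s hs => ?_).symm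
  rw [Measure.map_apply (measurable_pi_lambda _ fun k => hXm _) (MeasurableSet.univ_pi hs)]
  have hpre : (fun ω (k : κ) => X (J k) ω) ⁻¹' (Set.univ.pi s)
      = ⋂ k, X (J k) ⁻¹' s k := by
    ext ω; simp [Set.mem_pi]
  set g : ι → Set E := fun p => if h : ∃ k, J k = p then s h.choose else Set.univ with hg
  have hgJ : ∀ k, g (J k) = s k := by
    intro k
    have hex : ∃ k', J k' = J k := ⟨k, rfl⟩
    simp only [hg, dif_pos hex]
    exact congrArg s (hJ hex.choose_spec)
  have hgm : ∀ p, MeasurableSet (g p) := by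
    intro p; simp only [hg]; split
    · exact hs _
    · exact MeasurableSet.univ
  have hiInter : (⋂ k, X (J k) ⁻¹' s k) = ⋂ p ∈ Finset.univ.image J, X p ⁻¹' g p := by
    ext ω
    simp only [Set.mem_iInter, Set.mem_preimage, Finset.mem_image, Finset.mem_univ, true_and]
    constructor
    · rintro H p ⟨k, rfl⟩
      rw [hgJ k]; exact H k
    · intro H k
      have := H (J k) ⟨k, rfl⟩
      rwa [hgJ k] at this
  rw [hpre, hiInter,
    hind.meas_biInter (S := Finset.univ.image J) (s := fun p => X p ⁻¹' g p)
      (fun p _ => ⟨g p, hgm p, rfl⟩),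
    Finset.prod_image (fun a _ b _ hab => hJ hab)]
  refine Finset.prod_congr rfl fun k _ => ?_
  rw [hgJ k, Measure.map_apply (hXm _) (hs k)]

private lemma aux_identDistrib_tuple {κ : Type*} [Fintype κ]
    (hXm : ∀ p, Measurable (X p))
    (hind : iIndepFun X μ)
    (hid : ∀ p q, IdentDistrib (X p) (X q) μ μ)
    {J₁ J₂ : κ → ι} (hJ₁ : Function.Injective J₁) (hJ₂ : Function.Injective J₂) :
    IdentDistrib (fun ω (k : κ) => X (J₁ k) ω) (fun ω (k : κ) => X (J₂ k) ω) μ μ := by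
  refine ⟨(measurable_pi_lambda _ fun k => hXm _).aemeasurable,
    (measurable_pi_lambda _ fun k => hXm _).aemeasurable, ?_⟩
  rw [aux_map_tuple_eq_pi hXm hind hJ₁, aux_map_tuple_eq_pi hXm hind hJ₂]
  exact congrArg Measure.pi (funext fun k => (hid (J₁ k) (J₂ k)).map_eq)

private lemma aux_iIndepSet_of_disjoint_windows
    (hXm : ∀ p, Measurable (X p))
    (hind : iIndepFun X μ)
    (W : ℕ → Finset ι) (hW : Pairwise (Function.onFun Disjoint W))
    (B : ∀ r, Set ({x // x ∈ W r} → E)) (hB : ∀ r, MeasurableSet (B r)) :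
    iIndepSet (fun r => (fun ω (p : {x // x ∈ W r}) => X p.1 ω) ⁻¹' (B r)) μ := by
  classical
  have htm : ∀ r, Measurable (fun ω (p : {x // x ∈ W r}) => X p.1 ω) :=
    fun r => measurable_pi_lambda _ fun p => hXm p.1
  have hAm : ∀ r, MeasurableSet ((fun ω (p : {x // x ∈ W r}) => X p.1 ω) ⁻¹' (B r)) :=
    fun r => (htm r) (hB r)
  rw [iIndepSet_iff_meas_biInter hAm]
  intro R
  induction R using Finset.induction_on with
  | empty => simp
  | @insert r₀ R' hr₀ IH =>
    set A : ℕ → Set Ω := fun r => (fun ω (p : {x // x ∈ W r}) => X p.1 ω) ⁻¹' (B r) with hA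
    set S : Finset ι := R'.biUnion W with hS
    have hsub : ∀ r ∈ R', W r ⊆ S := fun r hr => Finset.subset_biUnion_of_mem W hr
    have hST : Disjoint S (W r₀) := by
      rw [hS, Finset.disjoint_biUnion_left]
      intro r hr
      exact hW (fun he => hr₀ (he ▸ hr))
    have hIndep := hind.indepFun_finset S (W r₀) hST hXm
    set G : ℕ → Set ({x // x ∈ S} → E) := fun r =>
      if hr : r ∈ R' then
        (fun (x : {x // x ∈ S} → E) (p : {x // x ∈ W r}) => x ⟨p.1, hsub r hr p.2⟩) ⁻¹' (B r)
      else Set.univ with hG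
    have hGm : ∀ r, MeasurableSet (G r) := by
      intro r; simp only [hG]; split
      · exact (measurable_pi_lambda _ fun p => measurable_pi_apply _) (hB r)
      · exact MeasurableSet.univ
    have hkey : ∀ r ∈ R', (fun ω (p : {x // x ∈ S}) => X p.1 ω) ⁻¹' (G r) = A r := by
      intro r hr
      simp only [hG, dif_pos hr]
      rfl
    have hInt : (⋂ r ∈ R', A r)
        = (fun ω (p : {x // x ∈ S}) => X p.1 ω) ⁻¹' (⋂ r ∈ R', G r) := by
      rw [Set.preimage_iInter₂]
      exact Set.iInter₂_congr fun r hr => (hkey r hr).symm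
    rw [Finset.set_biInter_insert, Finset.prod_insert hr₀, Set.inter_comm, hInt]
    have hGmeas : MeasurableSet (⋂ r ∈ R', G r) :=
      MeasurableSet.biInter (Finset.countable_toSet R') fun r _ => hGm r
    rw [hIndep.measure_inter_preimage_eq_mul _ _ hGmeas (hB r₀), ← hInt, IH]
    ring

end AuxLemmas

private lemma mem_Icc_coord {d : ℕ} {n : ℕ+} {i : Fin d → ℕ+}
    (hi : i ∈ Finset.Icc 1 (diag d n)) (l : Fin d) : i l ∈ Finset.Icc (1 : ℕ+) n := by
  rw [Finset.mem_Icc] at hi ⊢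
  exact ⟨hi.1 l, hi.2 l⟩

/-- The sum of squares over the cube `[1,n]^d`, as a function of a finite tuple of values. -/
private def Phi {E : Type*} (d : ℕ) (n : ℕ+) (h : (Fin d → E) → ℝ) :
    ((Fin d × {x // x ∈ Finset.Icc (1 : ℕ+) n}) → E) → ℝ :=
  fun x => ∑ i ∈ (Finset.Icc 1 (diag d n)).attach,
    (h fun l => x (l, ⟨i.1 l, mem_Icc_coord i.2 l⟩)) ^ 2

private lemma measurable_Phi {E : Type*} [MeasurableSpace E] (d : ℕ) (n : ℕ+)
    (h : (Fin d → E) → ℝ) (hhm : Measurable h) : Measurable (Phi d n h) := by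
  refine Finset.measurable_sum _ fun i _ => ?_
  exact ((hhm.comp (measurable_pi_lambda _ fun l => measurable_pi_apply _)).pow_const 2)

private lemma Phi_apply {E : Type*} (d : ℕ) (n : ℕ+) (h : (Fin d → E) → ℝ)
    (g : Fin d × ℕ+ → E) :
    Phi d n h (fun k => g (k.1, k.2.1))
      = ∑ i ∈ Finset.Icc 1 (diag d n), (h fun l => g (l, i l)) ^ 2 := by
  rw [← Finset.sum_attach (Finset.Icc 1 (diag d n)) (fun i => (h fun l => g (l, i l)) ^ 2)]
  rfl

private lemma shifted_mem_sector {d : ℕ} {θ : ℝ} (hθ0 : 0 < θ) {K : ℕ+}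
    (hK : θ * (((K : ℕ) : ℝ) + 1) < ((K : ℕ) : ℝ)) (n : ℕ+) {j : Fin d → ℕ+}
    (hj : ∀ l, K * n < j l ∧ j l ≤ (K + 1) * n) : j ∈ sector d θ := by
  have hjR : ∀ l, ((K : ℕ) : ℝ) * ((n : ℕ) : ℝ) < ((j l : ℕ) : ℝ)
      ∧ ((j l : ℕ) : ℝ) ≤ (((K : ℕ) : ℝ) + 1) * ((n : ℕ) : ℝ) := by
    intro l
    obtain ⟨h1, h2⟩ := hj l
    rw [← PNat.coe_lt_coe, PNat.mul_coe] at h1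
    rw [← PNat.coe_le_coe, PNat.mul_coe, PNat.add_coe, PNat.one_coe] at h2
    constructor
    · exact_mod_cast h1
    · exact_mod_cast h2
  have hnpos : (0 : ℝ) < ((n : ℕ) : ℝ) := by exact_mod_cast n.pos
  intro l k
  have hlk := hjR l
  have hkk := hjR k
  have hjkpos : (0 : ℝ) < ((j k : ℕ) : ℝ) := by exact_mod_cast (j k).pos
  have hjlpos : (0 : ℝ) < ((j l : ℕ) : ℝ) := by exact_mod_cast (j l).pos
  constructor
  · rw [lt_div_iff₀ hjkpos]
    calc θ * ((j k : ℕ) : ℝ) ≤ θ * ((((K : ℕ) : ℝ) + 1) * ((n : ℕ) : ℝ)) :=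
          mul_le_mul_of_nonneg_left hkk.2 hθ0.le
      _ = θ * (((K : ℕ) : ℝ) + 1) * ((n : ℕ) : ℝ) := by ring
      _ < ((K : ℕ) : ℝ) * ((n : ℕ) : ℝ) := mul_lt_mul_of_pos_right hK hnpos
      _ < ((j l : ℕ) : ℝ) := hlk.1
  · rw [div_lt_div_iff₀ hjkpos hθ0, one_mul]
    calc ((j l : ℕ) : ℝ) * θ = θ * ((j l : ℕ) : ℝ) := by ring
      _ ≤ θ * ((((K : ℕ) : ℝ) + 1) * ((n : ℕ) : ℝ)) := mul_le_mul_of_nonneg_left hlk.2 hθ0.le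
      _ = θ * (((K : ℕ) : ℝ) + 1) * ((n : ℕ) : ℝ) := by ring
      _ < ((K : ℕ) : ℝ) * ((n : ℕ) : ℝ) := mul_lt_mul_of_pos_right hK hnpos
      _ < ((j k : ℕ) : ℝ) := hkk.1

private lemma tendsto_diag_sectorFilter (d : ℕ) {θ : ℝ} (hθ0 : 0 < θ) (hθ1 : θ < 1) :
    Tendsto (fun m : ℕ+ => diag d m) atTop (sectorFilter d θ) := by
  rw [sectorFilter]
  refine tendsto_inf.2 ⟨?_, tendsto_principal.2 (Eventually.of_forall fun m => ?_)⟩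
  · rw [tendsto_atTop]
    intro b
    refine eventually_atTop.2 ⟨⟨(Finset.univ.sup fun l => (b l : ℕ)) + 1, Nat.succ_pos _⟩,
      fun m hm => ?_⟩
    intro l
    refine le_trans ?_ hm
    refine (PNat.coe_le_coe _ _).1 ?_
    exact le_trans (Finset.le_sup (f := fun l => (b l : ℕ)) (Finset.mem_univ l)) (Nat.le_succ _)
  · intro l k
    have h1 : ((m : ℕ) : ℝ) / ((m : ℕ) : ℝ) = 1 := div_self (by exact_mod_cast m.pos.ne')
    constructor
    · show θ < ((m : ℕ) : ℝ) / ((m : ℕ) : ℝ)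
      rw [h1]; exact hθ1
    · show ((m : ℕ) : ℝ) / ((m : ℕ) : ℝ) < 1 / θ
      rw [h1, lt_div_iff₀ hθ0, one_mul]; exact hθ1

/-- (2.11) implies diagonal convergence of the decoupled normalized sum of squares over the
full cube. -/
theorem sectorial_dec_squares_implies_diagonal_squares
{E Ω : Type*} [MeasurableSpace E] [MeasurableSpace Ω]
    (μ : Measure Ω) [IsProbabilityMeasure μ]
    (d : ℕ) (hd : 1 ≤ d) (θ : ℝ) (hθ0 : 0 < θ) (hθ1 : θ < 1)
(Xd : Fin d → ℕ+ → Ω → E) (hXdm : ∀ l i, Measurable (Xd l i))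
    (hXdind : iIndepFun (fun p : Fin d × ℕ+ => Xd p.1 p.2) μ)
    (hXdid : ∀ (l : Fin d) (i : ℕ+) (l' : Fin d) (i' : ℕ+),
      IdentDistrib (Xd l i) (Xd l' i') μ μ)
(h : (Fin d → E) → ℝ) (hhm : Measurable h)
    (hsym : ∀ (σ : Equiv.Perm (Fin d)) (x : Fin d → E), h (x ∘ σ) = h x)
(γ : (Fin d → ℕ+) → ℝ) (hγpos : ∀ n, 0 < γ n) (hγmono : Monotone γ)
    (C : ℝ) (hC : 0 < C) (hγdbl : ∀ n, γ (fun j => 2 * n j) ≤ C * γ n)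
    (hγ3 : ∀ l : ℕ, 1 ≤ l →
      (∑' k : ℕ, (2 : ℝ) ^ (d * (l + k)) / (γ (diag d (2 ^ (l + k)))) ^ 2)
        ≤ C * (2 : ℝ) ^ (d * l) / (γ (diag d (2 ^ l))) ^ 2)
    (h211 : (∀ᵐ ω ∂μ, Tendsto
        (fun n => (∑ i ∈ secIdxAll d θ n, (h fun l => Xd l (i l) ω) ^ 2) / (γ n) ^ 2)
        (sectorFilter d θ) (𝓝 0))) :
    (∀ᵐ ω ∂μ, Tendsto
        (fun m : ℕ+ =>
          (∑ i ∈ cubeIdxAll d (diag d m), (h fun l => Xd l (i l) ω) ^ 2) / (γ (diag d m)) ^ 2)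
        atTop (𝓝 0)) := by
  classical
  have hXm : ∀ p : Fin d × ℕ+, Measurable ((fun p : Fin d × ℕ+ => Xd p.1 p.2) p) :=
    fun p => hXdm p.1 p.2
  have hid : ∀ p q : Fin d × ℕ+,
      IdentDistrib ((fun p : Fin d × ℕ+ => Xd p.1 p.2) p)
        ((fun p : Fin d × ℕ+ => Xd p.1 p.2) q) μ μ :=
    fun p q => hXdid p.1 p.2 q.1 q.2
  -- choose the shift multiplier K
  obtain ⟨K, hK⟩ : ∃ K : ℕ+, θ * (((K : ℕ) : ℝ) + 1) < ((K : ℕ) : ℝ) := by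
    refine ⟨⟨Nat.ceil (θ / (1 - θ)) + 1, Nat.succ_pos _⟩, ?_⟩
    have h1θ : 0 < 1 - θ := by linarith
    have hceil : θ / (1 - θ) ≤ (Nat.ceil (θ / (1 - θ)) : ℝ) := Nat.le_ceil _
    have hKgt : θ / (1 - θ) < ((Nat.ceil (θ / (1 - θ)) + 1 : ℕ) : ℝ) := by
      push_cast; linarith
    have := (div_lt_iff₀ h1θ).1 hKgt
    show θ * (((Nat.ceil (θ / (1 - θ)) + 1 : ℕ) : ℝ) + 1) < ((Nat.ceil (θ / (1 - θ)) + 1 : ℕ) : ℝ)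
    nlinarith [Nat.cast_nonneg (α := ℝ) (Nat.ceil (θ / (1 - θ)) + 1)]
  -- the cube sums
  set Q : ℕ+ → Ω → ℝ :=
    fun m ω => ∑ i ∈ cubeIdxAll d (diag d m), (h fun l => Xd l (i l) ω) ^ 2 with hQdef
  have hQnonneg : ∀ m ω, 0 ≤ Q m ω := fun m ω => Finset.sum_nonneg fun i _ => sq_nonneg _
  have hQmeas : ∀ m, Measurable (Q m) := fun m =>
    Finset.measurable_sum _ fun i _ =>
      ((hhm.comp (measurable_pi_lambda _ fun l => hXdm l (i l))).pow_const 2)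
  have hQmono : ∀ ω ⦃m m' : ℕ+⦄, m ≤ m' → Q m ω ≤ Q m' ω := by
    intro ω m m' hmm'
    refine Finset.sum_le_sum_of_subset_of_nonneg ?_ fun i _ _ => sq_nonneg _
    exact Finset.Icc_subset_Icc le_rfl (fun _ => hmm')
  -- the shifted cube sums
  set Z : ℕ → Ω → ℝ := fun r ω =>
    Phi d (2 ^ r) h (fun k => Xd k.1 (k.2.1 + K * 2 ^ r) ω) with hZdef
  have hZmeas : ∀ r, Measurable (Z r) := fun r =>
    (measurable_Phi d (2 ^ r) h hhm).comp
      (measurable_pi_lambda _ fun k => hXdm k.1 (k.2.1 + K * 2 ^ r))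
  -- identically distributed with the cube sums
  have hZQid : ∀ r, IdentDistrib (Z r) (Q (2 ^ r)) μ μ := by
    intro r
    have hJ2 : Function.Injective
        (fun k : Fin d × {x // x ∈ Finset.Icc (1 : ℕ+) (2 ^ r)} =>
          ((k.1, k.2.1 + K * 2 ^ r) : Fin d × ℕ+)) := by
      intro a b hab
      simp only [Prod.mk.injEq] at hab
      obtain ⟨h1, h2⟩ := hab
      have h3 : a.2.1 = b.2.1 := by
        have := congrArg (PNat.val) h2
        simp only [PNat.add_coe] at this
        exact PNat.coe_injective (by omega)
      exact Prod.ext h1 (Subtype.ext h3)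
    have hJ1 : Function.Injective
        (fun k : Fin d × {x // x ∈ Finset.Icc (1 : ℕ+) (2 ^ r)} =>
          ((k.1, k.2.1) : Fin d × ℕ+)) := by
      intro a b hab
      simp only [Prod.mk.injEq] at hab
      exact Prod.ext hab.1 (Subtype.ext hab.2)
    have hident := (aux_identDistrib_tuple hXm hXdind hid hJ2 hJ1).comp
      (measurable_Phi d (2 ^ r) h hhm)
    have e2 : Q (2 ^ r) = Phi d (2 ^ r) h ∘ (fun ω k => Xd k.1 k.2.1 ω) := by
      funext ω
      exact (Phi_apply d (2 ^ r) h (fun p => Xd p.1 p.2 ω)).symm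
    rw [hZdef, e2]
    exact hident
  -- windows of indices used by the shifted sums
  set W : ℕ → Finset (Fin d × ℕ+) := fun r =>
    (Finset.univ : Finset (Fin d)) ×ˢ Finset.Ioc (K * 2 ^ r) ((K + 1) * 2 ^ r) with hWdef
  have hIocle : ∀ {r r' : ℕ}, r < r' → ((K + 1) * 2 ^ r : ℕ+) ≤ K * 2 ^ r' := by
    intro r r' hrr'
    rw [← PNat.coe_le_coe]
    simp only [PNat.mul_coe, PNat.add_coe, PNat.pow_coe, PNat.one_coe]
    have h2 : ((2 : ℕ+) : ℕ) ^ (r + 1) ≤ ((2 : ℕ+) : ℕ) ^ r' :=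
      Nat.pow_le_pow_right (by norm_num) hrr'
    have hK1 : 1 ≤ (K : ℕ) := K.one_le
    calc ((K : ℕ) + 1) * ((2 : ℕ+) : ℕ) ^ r ≤ (2 * (K : ℕ)) * ((2 : ℕ+) : ℕ) ^ r :=
          Nat.mul_le_mul_right _ (by omega)
      _ = (K : ℕ) * (((2 : ℕ+) : ℕ) * ((2 : ℕ+) : ℕ) ^ r) := by
          have : ((2 : ℕ+) : ℕ) = 2 := rfl
          rw [this]; ring
      _ = (K : ℕ) * ((2 : ℕ+) : ℕ) ^ (r + 1) := by rw [pow_succ, mul_comm (((2:ℕ+):ℕ)^r)]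
      _ ≤ (K : ℕ) * ((2 : ℕ+) : ℕ) ^ r' := Nat.mul_le_mul_left _ h2
  have hWdisj : Pairwise (Function.onFun Disjoint W) := by
    have key : ∀ {r r' : ℕ}, r < r' → Disjoint (W r) (W r') := by
      intro r r' hrr'
      rw [Finset.disjoint_left]
      rintro ⟨l, x⟩ hx hx'
      simp only [hWdef, Finset.mem_product, Finset.mem_Ioc] at hx hx'
      exact absurd (hx.2.2.trans (hIocle hrr')) (not_le.2 hx'.2.1)
    intro r r' hne
    rcases hne.lt_or_gt with hlt | hlt
    · exact key hlt
    · exact (key hlt).symm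
  have hmemW : ∀ (r : ℕ) (k : Fin d × {x // x ∈ Finset.Icc (1 : ℕ+) (2 ^ r)}),
      ((k.1, k.2.1 + K * 2 ^ r) : Fin d × ℕ+) ∈ W r := by
    intro r k
    have hk := k.2.2
    rw [Finset.mem_Icc] at hk
    simp only [hWdef, Finset.mem_product, Finset.mem_Ioc]
    refine ⟨Finset.mem_univ _, ?_, ?_⟩
    · exact PNat.lt_add_left _ _
    · calc k.2.1 + K * 2 ^ r ≤ 2 ^ r + K * 2 ^ r := add_le_add_left hk.2 _
        _ = (K + 1) * 2 ^ r := by rw [add_mul, one_mul, add_comm]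
  -- the shifted sums are jointly independent
  have hindepA : ∀ c : ℕ → ℝ, iIndepSet (fun r => Z r ⁻¹' Set.Ioi (c r)) μ := by
    intro c
    have hψm : ∀ r, Measurable (fun y : {x // x ∈ W r} → E =>
        Phi d (2 ^ r) h (fun k => y ⟨(k.1, k.2.1 + K * 2 ^ r), hmemW r k⟩)) := fun r =>
      (measurable_Phi d (2 ^ r) h hhm).comp
        (measurable_pi_lambda _ fun k => measurable_pi_apply _)
    have hins := aux_iIndepSet_of_disjoint_windows (X := fun p : Fin d × ℕ+ => Xd p.1 p.2)
      hXm hXdind W hWdisj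
      (fun r => (fun y : {x // x ∈ W r} → E =>
        Phi d (2 ^ r) h (fun k => y ⟨(k.1, k.2.1 + K * 2 ^ r), hmemW r k⟩)) ⁻¹' Set.Ioi (c r))
      (fun r => (hψm r) measurableSet_Ioi)
    exact hins
  -- pointwise domination by a sector sum
  have hZle : ∀ (r : ℕ) (ω : Ω), Z r ω
      ≤ ∑ i ∈ secIdxAll d θ (diag d ((K + 1) * 2 ^ r)), (h fun l => Xd l (i l) ω) ^ 2 := by
    intro r ω
    set G : (Fin d → ℕ+) → ℝ := fun j => (h fun l => Xd l (j l) ω) ^ 2 with hGdef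
    have e1 : Z r ω = ∑ i ∈ Finset.Icc 1 (diag d (2 ^ r)),
        G (fun l => i l + K * 2 ^ r) :=
      Phi_apply d (2 ^ r) h (fun p => Xd p.1 (p.2 + K * 2 ^ r) ω)
    have hinj : ∀ a ∈ Finset.Icc (1 : Fin d → ℕ+) (diag d (2 ^ r)),
        ∀ b ∈ Finset.Icc (1 : Fin d → ℕ+) (diag d (2 ^ r)),
        (fun l => a l + K * 2 ^ r) = (fun l => b l + K * 2 ^ r) → a = b := by
      intro a _ b _ hab
      funext l
      have h1 := congrArg PNat.val (congrFun hab l)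
      simp only [PNat.add_coe] at h1
      exact PNat.coe_injective (by omega)
    have e2 : ∑ i ∈ Finset.Icc 1 (diag d (2 ^ r)), G (fun l => i l + K * 2 ^ r)
        = ∑ j ∈ (Finset.Icc 1 (diag d (2 ^ r))).image (fun i l => i l + K * 2 ^ r), G j :=
      (Finset.sum_image hinj).symm
    rw [e1, e2, hGdef]
    refine Finset.sum_le_sum_of_subset_of_nonneg ?_ fun i _ _ => sq_nonneg _
    intro j hj
    obtain ⟨i, hi, rfl⟩ := Finset.mem_image.1 hj
    rw [Finset.mem_Icc] at hi
    have hbnd : ∀ l, K * 2 ^ r < i l + K * 2 ^ r ∧ i l + K * 2 ^ r ≤ (K + 1) * 2 ^ r := by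
      intro l
      refine ⟨PNat.lt_add_left _ _, ?_⟩
      calc i l + K * 2 ^ r ≤ 2 ^ r + K * 2 ^ r := add_le_add_left (hi.2 l) _
        _ = (K + 1) * 2 ^ r := by rw [add_mul, one_mul, add_comm]
    rw [secIdxAll, Finset.mem_filter, Finset.mem_Icc]
    exact ⟨⟨fun l => (i l + K * 2 ^ r).one_le, fun l => (hbnd l).2⟩,
      shifted_mem_sector hθ0 hK (2 ^ r) hbnd⟩
  -- γ comparison facts
  have hpow : ∀ (s : ℕ) (n : Fin d → ℕ+), γ (fun j => 2 ^ s * n j) ≤ C ^ s * γ n := by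
    intro s
    induction s with
    | zero =>
      intro n
      simp only [pow_zero, one_mul]
      exact le_of_eq rfl
    | succ s IH =>
      intro n
      have e : (fun j => (2 : ℕ+) ^ (s + 1) * n j) = (fun j => 2 * ((2 : ℕ+) ^ s * n j)) := by
        funext j
        rw [pow_succ, mul_comm ((2 : ℕ+) ^ s) 2, mul_assoc]
      rw [e]
      calc γ (fun j => 2 * ((2 : ℕ+) ^ s * n j)) ≤ C * γ (fun j => (2 : ℕ+) ^ s * n j) :=
            hγdbl _
        _ ≤ C * (C ^ s * γ n) := mul_le_mul_of_nonneg_left (IH n) hC.le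
        _ = C ^ (s + 1) * γ n := by ring
  have hbig : ∀ r : ℕ, γ (diag d ((K + 1) * 2 ^ r)) ≤ C ^ (K : ℕ) * γ (diag d (2 ^ r)) := by
    intro r
    have hle : ((K + 1) * 2 ^ r : ℕ+) ≤ 2 ^ (K : ℕ) * 2 ^ r := by
      rw [← PNat.coe_le_coe]
      simp only [PNat.mul_coe, PNat.add_coe, PNat.pow_coe, PNat.one_coe]
      have h1 : (K : ℕ) + 1 ≤ ((2 : ℕ+) : ℕ) ^ (K : ℕ) := by
        have h2 := Nat.lt_two_pow_self (n := (K : ℕ))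
        show (K : ℕ) + 1 ≤ 2 ^ (K : ℕ)
        omega
      exact Nat.mul_le_mul_right _ h1
    calc γ (diag d ((K + 1) * 2 ^ r)) ≤ γ (diag d (2 ^ (K : ℕ) * 2 ^ r)) :=
          hγmono (fun _ => hle)
      _ = γ (fun j => 2 ^ (K : ℕ) * diag d (2 ^ r) j) := rfl
      _ ≤ C ^ (K : ℕ) * γ (diag d (2 ^ r)) := hpow _ _
  have hZnn : ∀ (r : ℕ) (ω : Ω), 0 ≤ Z r ω :=
    fun r ω => Finset.sum_nonneg fun i _ => sq_nonneg _
  -- a.s. convergence of the normalized shifted sums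
  have hZtend : ∀ᵐ ω ∂μ, Tendsto (fun r : ℕ => Z r ω / (γ (diag d (2 ^ r))) ^ 2)
      atTop (𝓝 0) := by
    have hdiagAE := h211.mono (fun ω hω => hω.comp (tendsto_diag_sectorFilter d hθ0 hθ1))
    refine hdiagAE.mono fun ω hω => ?_
    have hbigTend : Tendsto (fun r : ℕ => ((K + 1) * 2 ^ r : ℕ+)) atTop atTop := by
      rw [tendsto_atTop]
      intro b
      refine eventually_atTop.2 ⟨(b : ℕ), fun r hr => ?_⟩
      rw [← PNat.coe_le_coe]
      simp only [PNat.mul_coe, PNat.add_coe, PNat.pow_coe, PNat.one_coe]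
      have h1 : (b : ℕ) < 2 ^ (b : ℕ) := Nat.lt_two_pow_self
      have h2 : (2 : ℕ) ^ (b : ℕ) ≤ 2 ^ r := Nat.pow_le_pow_right (by norm_num) hr
      have h3 : (b : ℕ) ≤ ((2 : ℕ+) : ℕ) ^ r := by
        show (b : ℕ) ≤ 2 ^ r
        omega
      calc (b : ℕ) ≤ ((2 : ℕ+) : ℕ) ^ r := h3
        _ = 1 * ((2 : ℕ+) : ℕ) ^ r := (one_mul _).symm
        _ ≤ ((K : ℕ) + 1) * ((2 : ℕ+) : ℕ) ^ r := Nat.mul_le_mul_right _ (by omega)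
    have h1 : Tendsto (fun r : ℕ =>
        (∑ i ∈ secIdxAll d θ (diag d ((K + 1) * 2 ^ r)), (h fun l => Xd l (i l) ω) ^ 2)
          / (γ (diag d ((K + 1) * 2 ^ r))) ^ 2) atTop (𝓝 0) := hω.comp hbigTend
    have h2 := h1.const_mul ((C ^ (K : ℕ)) ^ 2)
    rw [mul_zero] at h2
    refine squeeze_zero (fun r => div_nonneg (hZnn r ω) (sq_nonneg _)) (fun r => ?_) h2
    have hMnn : (0:ℝ) ≤ ∑ i ∈ secIdxAll d θ (diag d ((K + 1) * 2 ^ r)),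
        (h fun l => Xd l (i l) ω) ^ 2 := Finset.sum_nonneg fun i _ => sq_nonneg _
    have hγn := hγpos (diag d (2 ^ r))
    have hγb := hγpos (diag d ((K + 1) * 2 ^ r))
    have hDpos : (0:ℝ) < C ^ (K : ℕ) := pow_pos hC _
    rw [div_le_iff₀ (pow_pos (hγpos (diag d (2 ^ r))) 2)]
    have e3 : (C ^ (K : ℕ)) ^ 2 * ((∑ i ∈ secIdxAll d θ (diag d ((K + 1) * 2 ^ r)),
          (h fun l => Xd l (i l) ω) ^ 2) / (γ (diag d ((K + 1) * 2 ^ r))) ^ 2)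
          * (γ (diag d (2 ^ r))) ^ 2
        = (∑ i ∈ secIdxAll d θ (diag d ((K + 1) * 2 ^ r)), (h fun l => Xd l (i l) ω) ^ 2)
          * ((C ^ (K : ℕ) * γ (diag d (2 ^ r))) ^ 2 / (γ (diag d ((K + 1) * 2 ^ r))) ^ 2) := by
      ring
    rw [e3]
    have h4 : (1:ℝ) ≤ (C ^ (K : ℕ) * γ (diag d (2 ^ r))) ^ 2
        / (γ (diag d ((K + 1) * 2 ^ r))) ^ 2 := by
      rw [le_div_iff₀ (pow_pos (hγpos (diag d ((K + 1) * 2 ^ r))) 2), one_mul]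
      exact pow_le_pow_left₀ hγb.le (hbig r) 2
    calc Z r ω ≤ ∑ i ∈ secIdxAll d θ (diag d ((K + 1) * 2 ^ r)),
          (h fun l => Xd l (i l) ω) ^ 2 := hZle r ω
      _ = (∑ i ∈ secIdxAll d θ (diag d ((K + 1) * 2 ^ r)),
          (h fun l => Xd l (i l) ω) ^ 2) * 1 := (mul_one _).symm
      _ ≤ _ := mul_le_mul_of_nonneg_left h4 hMnn
  -- Borel–Cantelli arguments
  have hBC : ∀ q : ℕ, ∀ᵐ ω ∂μ, ∀ᶠ r : ℕ in atTop,
      ¬ ((1 : ℝ) / (q + 1) * (γ (diag d (2 ^ r))) ^ 2 < Q (2 ^ r) ω) := by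
    intro q
    set c : ℕ → ℝ := fun r => (1 : ℝ) / (q + 1) * (γ (diag d (2 ^ r))) ^ 2 with hc
    have hq1 : (0:ℝ) < (q : ℝ) + 1 := by exact_mod_cast Nat.succ_pos q
    have hεpos : (0:ℝ) < 1 / ((q : ℝ) + 1) := div_pos one_pos hq1
    have hsum : ∑' r, μ (Z r ⁻¹' Set.Ioi (c r)) ≠ ∞ := by
      intro hcon
      have hBC2 := ProbabilityTheory.measure_limsup_eq_one
        (fun r => (hZmeas r) measurableSet_Ioi) (hindepA c) hcon
      have h0 : μ (limsup (fun r => Z r ⁻¹' Set.Ioi (c r)) atTop) = 0 := by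
        refine measure_mono_null ?_ (ae_iff.1 hZtend)
        intro ω hω
        simp only [Set.mem_setOf_eq]
        intro htend
        rw [mem_limsup_iff_frequently_mem] at hω
        have hev : ∀ᶠ r : ℕ in atTop, Z r ω / (γ (diag d (2 ^ r))) ^ 2 < 1 / (q + 1) :=
          htend.eventually_lt_const hεpos
        obtain ⟨r, hr1, hr2⟩ := (hω.and_eventually hev).exists
        have hγ2 : (0:ℝ) < (γ (diag d (2 ^ r))) ^ 2 := pow_pos (hγpos _) 2
        rw [div_lt_iff₀ hγ2] at hr2
        have hclt : (1 : ℝ) / (q + 1) * (γ (diag d (2 ^ r))) ^ 2 < Z r ω := hr1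
        linarith
      rw [h0] at hBC2
      exact zero_ne_one hBC2
    have htrans : ∀ r, μ (Q (2 ^ r) ⁻¹' Set.Ioi (c r)) = μ (Z r ⁻¹' Set.Ioi (c r)) := by
      intro r
      rw [← Measure.map_apply (hQmeas (2 ^ r)) measurableSet_Ioi,
        ← Measure.map_apply (hZmeas r) measurableSet_Ioi, (hZQid r).map_eq]
    have hsum' : ∑' r, μ (Q (2 ^ r) ⁻¹' Set.Ioi (c r)) ≠ ∞ := by
      rw [tsum_congr htrans]
      exact hsum
    refine (MeasureTheory.ae_eventually_notMem hsum').mono fun ω hω2 => hω2.mono fun r hr => ?_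
    intro hlt
    exact hr hlt
  have hae := ae_all_iff.2 hBC
  filter_upwards [hae] with ω hω
  have hγnpos : ∀ r : ℕ, (0:ℝ) < (γ (diag d (2 ^ r))) ^ 2 := fun r => pow_pos (hγpos _) 2
  -- dyadic convergence for this ω
  have hdy : Tendsto (fun r : ℕ => Q (2 ^ r) ω / (γ (diag d (2 ^ r))) ^ 2) atTop (𝓝 0) := by
    rw [Metric.tendsto_atTop]
    intro ε hε
    obtain ⟨q, hq⟩ := exists_nat_one_div_lt hε
    obtain ⟨N, hN⟩ := eventually_atTop.1 (hω q)
    refine ⟨N, fun r hr => ?_⟩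
    have h1 := hN r hr
    push_neg at h1
    rw [Real.dist_eq, sub_zero, abs_of_nonneg (div_nonneg (hQnonneg _ _) (hγnpos r).le)]
    calc Q (2 ^ r) ω / (γ (diag d (2 ^ r))) ^ 2 ≤ 1 / (q + 1) := by
          rw [div_le_iff₀ (hγnpos r)]
          linarith [h1]
      _ < ε := hq
  -- glue: from the dyadic sequence to all of ℕ+
  rw [Metric.tendsto_atTop]
  intro ε hε
  have hεC : (0:ℝ) < ε / C ^ 2 := div_pos hε (pow_pos hC 2)
  obtain ⟨R, hR⟩ := (Metric.tendsto_atTop.1 hdy) (ε / C ^ 2) hεC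
  refine ⟨2 ^ R, fun m hm => ?_⟩
  set r : ℕ := Nat.log 2 (m : ℕ) with hrdef
  have hm0 : (m : ℕ) ≠ 0 := m.pos.ne'
  have hm1 : (2 : ℕ) ^ r ≤ (m : ℕ) := Nat.pow_log_le_self 2 hm0
  have hm2 : (m : ℕ) < 2 ^ (r + 1) := Nat.lt_pow_succ_log_self (by norm_num) _
  have hRr : R ≤ r := by
    have h2Rm : ((2 : ℕ+) ^ R : ℕ+) ≤ m := hm
    rw [← PNat.coe_le_coe, PNat.pow_coe] at h2Rm
    exact (Nat.le_log_iff_pow_le (by norm_num) hm0).2 h2Rm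
  have hQle : Q m ω ≤ Q (2 ^ (r + 1)) ω := by
    apply hQmono
    rw [← PNat.coe_le_coe, PNat.pow_coe]
    exact hm2.le
  have hγmle : γ (diag d (2 ^ r)) ≤ γ (diag d m) := by
    apply hγmono
    intro _
    show (2 : ℕ+) ^ r ≤ m
    rw [← PNat.coe_le_coe, PNat.pow_coe]
    exact hm1
  have hγdb : γ (diag d (2 ^ (r + 1))) ≤ C * γ (diag d (2 ^ r)) := by
    have e : diag d ((2 : ℕ+) ^ (r + 1)) = fun j => 2 * diag d (2 ^ r) j := by
      funext j
      show (2 : ℕ+) ^ (r + 1) = 2 * 2 ^ r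
      rw [pow_succ]
      exact mul_comm _ _
    rw [e]
    exact hγdbl _
  have hRr1 := hR (r + 1) (by omega)
  rw [Real.dist_eq, sub_zero,
    abs_of_nonneg (div_nonneg (hQnonneg _ _) (hγnpos (r + 1)).le)] at hRr1
  rw [Real.dist_eq, sub_zero,
    abs_of_nonneg (div_nonneg (hQnonneg _ _) (sq_nonneg (γ (diag d m))))]
  have hQr1 : Q (2 ^ (r + 1)) ω < ε / C ^ 2 * (γ (diag d (2 ^ (r + 1)))) ^ 2 := by
    rw [div_lt_iff₀ (hγnpos (r + 1))] at hRr1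
    exact hRr1
  have hchain : (γ (diag d (2 ^ (r + 1)))) ^ 2 ≤ C ^ 2 * (γ (diag d m)) ^ 2 := by
    have h5 : γ (diag d (2 ^ (r + 1))) ≤ C * γ (diag d m) :=
      le_trans hγdb (mul_le_mul_of_nonneg_left hγmle hC.le)
    calc (γ (diag d (2 ^ (r + 1)))) ^ 2 ≤ (C * γ (diag d m)) ^ 2 :=
          pow_le_pow_left₀ (hγpos _).le h5 2
      _ = C ^ 2 * (γ (diag d m)) ^ 2 := by ring
  rw [div_lt_iff₀ (pow_pos (hγpos (diag d m)) 2)]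
  calc Q m ω ≤ Q (2 ^ (r + 1)) ω := hQle
    _ < ε / C ^ 2 * (γ (diag d (2 ^ (r + 1)))) ^ 2 := hQr1
    _ ≤ ε / C ^ 2 * (C ^ 2 * (γ (diag d m)) ^ 2) :=
        mul_le_mul_of_nonneg_left hchain hεC.le
    _ = ε * (γ (diag d m)) ^ 2 := by field_simp
end
end

section
/- Lévy-type maximal inequality for decoupled sectorial sums: for every N ∈ ℤ_+ and every t > 0, P{ max over n ∈ S_θ^d with n ≤ (N,…,N) of | Σ_{i ≤ n, i ∈ S_θ^d} ε_i^dec h(X_i^dec) | > t } ≤ 2^d · P{ | Σ_{i ≤ (N,…,N), i ∈ S_θ^d} ε_i^dec h(X_i^dec) | > t }. -/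
open MeasureTheory ProbabilityTheory Filter Finset
open scoped Topology ENNReal

noncomputable section

/-! ### Auxiliary definitions for the proof -/

/-- The decoupled sum as a function on the canonical product space. -/
def Shat {E : Type*} (d : ℕ) (θ : ℝ) (h : (Fin d → E) → ℝ) (n : Fin d → ℕ+)
    (z : ((Fin d × ℕ+) → E) × ((Fin d × ℕ+) → ℝ)) : ℝ :=
  ∑ i ∈ secIdxAll d θ n, (∏ l, z.2 (l, i l)) * h (fun l => z.1 (l, i l))

open scoped Classical in
/-- Sign-flip vector: flips coordinate `(l, j)` for `j > v`. -/
def flipc (d : ℕ) (l : Fin d) (v : ℕ) (p : Fin d × ℕ+) : ℝ :=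
  if p.1 = l ∧ v < (p.2 : ℕ) then -1 else 1

/-- Sign-flip map on the canonical product space. -/
def flipz {E : Type*} (d : ℕ) (l : Fin d) (v : ℕ)
    (z : ((Fin d × ℕ+) → E) × ((Fin d × ℕ+) → ℝ)) :
    ((Fin d × ℕ+) → E) × ((Fin d × ℕ+) → ℝ) :=
  (z.1, fun p => flipc d l v p * z.2 p)

open scoped Classical in
/-- Multi-indices `n ≤ (N,…,N)` whose first `k` coordinates equal `N`. -/
def Ck (d : ℕ) (N : ℕ+) (k : ℕ) : Finset (Fin d → ℕ+) :=
  (Finset.Icc 1 (diag d N)).filter fun n => ∀ l : Fin d, (l : ℕ) < k → n l = N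

lemma finMax_mono {ι : Type*} {s s' : Finset ι} (hs : s ⊆ s') (f : ι → ℝ) :
    finMax s f ≤ finMax s' f := by
  rw [finMax, Finset.fold_max_le]
  exact ⟨(Finset.le_fold_max _).mpr (Or.inl le_rfl),
    fun x hx => (Finset.le_fold_max _).mpr (Or.inr ⟨x, hs hx, le_rfl⟩)⟩

lemma finMax_meas {α ι : Type*} [MeasurableSpace α] (s : Finset ι) (F : ι → α → ℝ)
    (hF : ∀ n, Measurable (F n)) : Measurable (fun z => finMax s (fun n => F n z)) := by
  classical
  induction s using Finset.induction with
  | empty => simp only [finMax, Finset.fold_empty]; exact measurable_const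
  | @insert a s ha ih =>
      simp only [finMax, Finset.fold_insert ha]
      exact (hF a).max ih

lemma le_of_mem_secIdxAll {d : ℕ} {θ : ℝ} {n i : Fin d → ℕ+} (hi : i ∈ secIdxAll d θ n) :
    i ≤ n := by
  classical
  simp only [secIdxAll, Finset.mem_filter, Finset.mem_Icc] at hi
  exact hi.1.2

lemma prod_flipc {d : ℕ} (l : Fin d) (v : ℕ) (i : Fin d → ℕ+) :
    (∏ l' : Fin d, flipc d l v (l', i l')) = if v < ((i l : ℕ)) then -1 else 1 := by
  classical
  rw [Finset.prod_eq_single l]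
  · simp [flipc]
  · intro b _ hb; simp [flipc, hb]
  · intro habs; exact absurd (Finset.mem_univ l) habs

lemma shat_term_flip {E : Type*} (d : ℕ) (h : (Fin d → E) → ℝ) (l : Fin d) (v : ℕ)
    (z : ((Fin d × ℕ+) → E) × ((Fin d × ℕ+) → ℝ)) (i : Fin d → ℕ+) :
    (∏ l', (flipz d l v z).2 (l', i l')) * h (fun l' => (flipz d l v z).1 (l', i l'))
      = (if v < ((i l : ℕ)) then -1 else 1)
          * ((∏ l', z.2 (l', i l')) * h (fun l' => z.1 (l', i l'))) := by
  simp only [flipz]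
  rw [Finset.prod_mul_distrib, prod_flipc]
  ring

lemma shat_flip_eq {E : Type*} (d : ℕ) (θ : ℝ) (h : (Fin d → E) → ℝ) (n : Fin d → ℕ+)
    (l : Fin d) (v : ℕ) (hnv : ((n l : ℕ)) ≤ v)
    (z : ((Fin d × ℕ+) → E) × ((Fin d × ℕ+) → ℝ)) :
    Shat d θ h n (flipz d l v z) = Shat d θ h n z := by
  unfold Shat
  refine Finset.sum_congr rfl fun i hi => ?_
  rw [shat_term_flip]
  have hil : ((i l : ℕ)) ≤ v := le_trans (by exact_mod_cast le_of_mem_secIdxAll hi l) hnv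
  rw [if_neg (not_lt.mpr hil), one_mul]

lemma secIdxAll_update_filter (d : ℕ) (θ : ℝ) (n : Fin d → ℕ+) (l : Fin d) (N : ℕ+)
    (hnN : n l ≤ N) :
    ((secIdxAll d θ (Function.update n l N)).filter
      (fun i => ((i l : ℕ)) ≤ ((n l : ℕ)))) = secIdxAll d θ n := by
  classical
  ext i
  simp only [secIdxAll, Finset.mem_filter, Finset.mem_Icc, Pi.le_def]
  constructor
  · rintro ⟨⟨⟨h1, h2⟩, hsec⟩, hle⟩
    refine ⟨⟨h1, fun j => ?_⟩, hsec⟩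
    by_cases hj : j = l
    · subst hj; exact_mod_cast hle
    · have := h2 j; rwa [Function.update_of_ne hj] at this
  · rintro ⟨⟨h1, h2⟩, hsec⟩
    refine ⟨⟨⟨h1, fun j => ?_⟩, hsec⟩, ?_⟩
    · by_cases hj : j = l
      · subst hj; rw [Function.update_self]; exact le_trans (h2 j) hnN
      · rw [Function.update_of_ne hj]; exact h2 j
    · exact_mod_cast h2 l

lemma shat_flip_add {E : Type*} (d : ℕ) (θ : ℝ) (h : (Fin d → E) → ℝ) (n : Fin d → ℕ+)
    (l : Fin d) (N : ℕ+) (hnN : n l ≤ N)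
    (z : ((Fin d × ℕ+) → E) × ((Fin d × ℕ+) → ℝ)) :
    Shat d θ h (Function.update n l N) z
      + Shat d θ h (Function.update n l N) (flipz d l ((n l : ℕ)) z)
      = 2 * Shat d θ h n z := by
  classical
  unfold Shat
  rw [← Finset.sum_add_distrib]
  have hterm : ∀ i ∈ secIdxAll d θ (Function.update n l N),
      ((∏ l', z.2 (l', i l')) * h (fun l' => z.1 (l', i l'))
        + (∏ l', (flipz d l ((n l : ℕ)) z).2 (l', i l'))
            * h (fun l' => (flipz d l ((n l : ℕ)) z).1 (l', i l')))
      = if ((i l : ℕ)) ≤ ((n l : ℕ)) then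
          2 * ((∏ l', z.2 (l', i l')) * h (fun l' => z.1 (l', i l'))) else 0 := by
    intro i _
    rw [shat_term_flip]
    by_cases hil : ((n l : ℕ)) < ((i l : ℕ))
    · rw [if_pos hil, if_neg (not_le.mpr hil)]; ring
    · rw [if_neg hil, if_pos (not_lt.mp hil)]; ring
  rw [Finset.sum_congr rfl hterm, ← Finset.sum_filter, secIdxAll_update_filter d θ n l N hnN,
    ← Finset.mul_sum]

lemma shat_meas {E : Type*} [MeasurableSpace E] (d : ℕ) (θ : ℝ) (h : (Fin d → E) → ℝ)
    (hhm : Measurable h) (n : Fin d → ℕ+) : Measurable (Shat d θ h n) := by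
  apply Finset.measurable_sum
  intro i _
  apply Measurable.mul
  · exact Finset.measurable_prod _ fun l _ => (measurable_pi_apply _).comp measurable_snd
  · exact hhm.comp (measurable_pi_lambda _ fun l => (measurable_pi_apply _).comp measurable_fst)

lemma flipz_meas {E : Type*} [MeasurableSpace E] (d : ℕ) (l : Fin d) (v : ℕ) :
    Measurable (flipz (E := E) d l v) :=
  measurable_fst.prodMk (measurable_pi_lambda _ fun p =>
    ((measurable_pi_apply p).comp measurable_snd).const_mul _)

lemma meas_lt_finMax {E : Type*} [MeasurableSpace E] (d : ℕ) (θ : ℝ) (h : (Fin d → E) → ℝ)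
    (hhm : Measurable h) (t : ℝ) (s : Finset (Fin d → ℕ+)) :
    MeasurableSet {z : ((Fin d × ℕ+) → E) × ((Fin d × ℕ+) → ℝ) |
      t < finMax s (fun n => |Shat d θ h n z|)} :=
  measurableSet_lt measurable_const (finMax_meas s _ fun n => (shat_meas d θ h hhm n).abs)

lemma levy_step {E : Type*} [MeasurableSpace E] (d : ℕ) (θ : ℝ) (h : (Fin d → E) → ℝ)
    (hhm : Measurable h) (N : ℕ+) (t : ℝ) (ht : 0 < t)
    (ν : Measure (((Fin d × ℕ+) → E) × ((Fin d × ℕ+) → ℝ)))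
    (hν : ∀ (l : Fin d) (v : ℕ), ν.map (flipz d l v) = ν)
    (k : ℕ) (hk : k < d) :
    ν {z | t < finMax (Ck d N k) fun n => |Shat d θ h n z|}
      ≤ 2 * ν {z | t < finMax (Ck d N (k+1)) fun n => |Shat d θ h n z|} := by
  classical
  set l : Fin d := ⟨k, hk⟩ with hl
  set T : Set (((Fin d × ℕ+) → E) × ((Fin d × ℕ+) → ℝ)) :=
    {z | t < finMax (Ck d N (k+1)) fun n => |Shat d θ h n z|} with hT
  have hTm : MeasurableSet T := meas_lt_finMax d θ h hhm t _
  set Ev : ℕ → Set (((Fin d × ℕ+) → E) × ((Fin d × ℕ+) → ℝ)) := fun v =>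
    {z | t < finMax ((Ck d N k).filter fun n => ((n l : ℕ)) ≤ v)
      fun n => |Shat d θ h n z|} with hEv
  have hEvm : ∀ v, MeasurableSet (Ev v) := fun v => meas_lt_finMax d θ h hhm t _
  have hmono : ∀ v w : ℕ, v ≤ w → Ev v ⊆ Ev w := by
    intro v w hvw z hz
    exact lt_of_lt_of_le hz (finMax_mono
      (Finset.monotone_filter_right _ fun n _ hn => le_trans hn hvw) _)
  have core : ∀ v : ℕ, ν (Ev (v+1) \ Ev v) ≤ 2 * ν ((Ev (v+1) \ Ev v) ∩ T) := by
    intro v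
    set φ := flipz (E := E) d l (v+1) with hφ
    have hφm : Measurable φ := flipz_meas d l (v+1)
    have hginv : ∀ w, w ≤ v+1 → ∀ z,
        (finMax ((Ck d N k).filter fun n => ((n l : ℕ)) ≤ w)
          fun n => |Shat d θ h n (φ z)|)
        = finMax ((Ck d N k).filter fun n => ((n l : ℕ)) ≤ w)
          fun n => |Shat d θ h n z| := by
      intro w hw z
      unfold finMax
      refine Finset.fold_congr fun n hn => ?_
      have hnl : ((n l : ℕ)) ≤ v + 1 := le_trans (Finset.mem_filter.mp hn).2 hw
      rw [hφ, shat_flip_eq d θ h n l (v+1) hnl z]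
    have hEinv : ∀ w, w ≤ v + 1 → φ ⁻¹' Ev w = Ev w := by
      intro w hw; ext z
      simp only [hEv, Set.mem_preimage, Set.mem_setOf_eq]
      rw [hginv w hw z]
    have hsub : Ev (v+1) \ Ev v ⊆ T ∪ φ ⁻¹' T := by
      rintro z ⟨hz1, hz2⟩
      simp only [hEv, Set.mem_setOf_eq, finMax] at hz1 hz2
      rcases (Finset.lt_fold_max _).mp hz1 with h0 | ⟨n, hn, hnt⟩
      · exact absurd h0 (not_lt.mpr ht.le)
      obtain ⟨hnCk, hnlv⟩ := Finset.mem_filter.mp hn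
      have hnl : ((n l : ℕ)) = v + 1 := by
        rcases Nat.lt_or_ge ((n l : ℕ)) (v+1) with hlt | hge
        · exact absurd ((Finset.lt_fold_max _).mpr (Or.inr
            ⟨n, Finset.mem_filter.mpr ⟨hnCk, Nat.lt_succ_iff.mp hlt⟩, hnt⟩)) hz2
        · exact le_antisymm hnlv hge
      have hnIcc := (Finset.mem_filter.mp hnCk).1
      have hnprop := (Finset.mem_filter.mp hnCk).2
      have hnN : n ≤ diag d N := (Finset.mem_Icc.mp hnIcc).2
      set m := Function.update n l N with hm
      have hmCk : m ∈ Ck d N (k+1) := by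
        refine Finset.mem_filter.mpr ⟨Finset.mem_Icc.mpr ⟨?_, ?_⟩, ?_⟩
        · intro j; exact (m j).one_le
        · intro j; by_cases hj : j = l
          · subst hj; rw [hm, Function.update_self]; exact le_rfl
          · rw [hm, Function.update_of_ne hj]; exact hnN j
        · intro j hj
          by_cases hj' : j = l
          · subst hj'; rw [hm, Function.update_self]
          · have hjk : (j : ℕ) < k := by
              rcases Nat.lt_succ_iff_lt_or_eq.mp hj with h' | h'
              · exact h'
              · exact absurd (Fin.ext h') hj'
            rw [hm, Function.update_of_ne hj']; exact hnprop j hjk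
      have hkey : Shat d θ h m z + Shat d θ h m (φ z) = 2 * Shat d θ h n z := by
        have h0 := shat_flip_add d θ h n l N (hnN l) z
        rw [hφ, ← hnl]
        exact h0
      have hcase : t < |Shat d θ h m z| ∨ t < |Shat d θ h m (φ z)| := by
        by_contra hcon
        push_neg at hcon
        have habs : |2 * Shat d θ h n z| ≤ 2 * t := by
          rw [← hkey]
          calc |Shat d θ h m z + Shat d θ h m (φ z)|
              ≤ |Shat d θ h m z| + |Shat d θ h m (φ z)| := abs_add_le _ _
            _ ≤ t + t := add_le_add hcon.1 hcon.2
            _ = 2 * t := by ring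
        rw [abs_mul] at habs
        have : |Shat d θ h n z| ≤ t := by
          have h2 : |(2:ℝ)| = 2 := by norm_num
          rw [h2] at habs; linarith
        exact absurd hnt (not_lt.mpr this)
      rcases hcase with hc | hc
      · exact Or.inl (by simp only [hT, Set.mem_setOf_eq, finMax]; exact (Finset.lt_fold_max _).mpr (Or.inr ⟨m, hmCk, hc⟩))
      · exact Or.inr (by simp only [hT, Set.mem_preimage, Set.mem_setOf_eq, finMax]; exact (Finset.lt_fold_max _).mpr (Or.inr ⟨m, hmCk, hc⟩))
    have hBm : MeasurableSet (Ev (v+1) \ Ev v) := (hEvm _).diff (hEvm _)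
    have hsplit : Ev (v+1) \ Ev v
        ⊆ ((Ev (v+1) \ Ev v) ∩ T) ∪ ((Ev (v+1) \ Ev v) ∩ φ ⁻¹' T) := by
      intro z hz
      rcases hsub hz with h' | h'
      · exact Or.inl ⟨hz, h'⟩
      · exact Or.inr ⟨hz, h'⟩
    have heq : ν ((Ev (v+1) \ Ev v) ∩ φ ⁻¹' T) = ν ((Ev (v+1) \ Ev v) ∩ T) := by
      have hpre : (Ev (v+1) \ Ev v) ∩ φ ⁻¹' T = φ ⁻¹' ((Ev (v+1) \ Ev v) ∩ T) := by
        rw [Set.preimage_inter, Set.preimage_diff, hEinv (v+1) le_rfl, hEinv v (Nat.le_succ v)]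
      rw [hpre, ← Measure.map_apply hφm (hBm.inter hTm), hν l (v+1)]
    calc ν (Ev (v+1) \ Ev v)
        ≤ ν (((Ev (v+1) \ Ev v) ∩ T) ∪ ((Ev (v+1) \ Ev v) ∩ φ ⁻¹' T)) := measure_mono hsplit
      _ ≤ ν ((Ev (v+1) \ Ev v) ∩ T) + ν ((Ev (v+1) \ Ev v) ∩ φ ⁻¹' T) := measure_union_le _ _
      _ = 2 * ν ((Ev (v+1) \ Ev v) ∩ T) := by rw [heq, ← two_mul]
  have htel : ∀ V : ℕ, ν (Ev V) ≤ 2 * ∑ v ∈ Finset.range V, ν ((Ev (v+1) \ Ev v) ∩ T) := by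
    intro V
    induction V with
    | zero =>
      have hE0 : Ev 0 = ∅ := by
        ext z
        simp only [hEv, Set.mem_setOf_eq, Set.mem_empty_iff_false, iff_false]
        have hfe : ((Ck d N k).filter fun n => ((n l : ℕ)) ≤ 0) = ∅ :=
          Finset.filter_false_of_mem fun n _ hle => absurd (Nat.le_zero.mp hle) (n l).pos.ne'
        rw [hfe]
        unfold finMax
        rw [Finset.fold_empty]
        exact not_lt.mpr ht.le
      simp [hE0]
    | succ V ih =>
      have hsub2 : Ev (V+1) ⊆ Ev V ∪ (Ev (V+1) \ Ev V) := by
        intro z hz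
        by_cases h' : z ∈ Ev V
        · exact Or.inl h'
        · exact Or.inr ⟨hz, h'⟩
      calc ν (Ev (V+1)) ≤ ν (Ev V) + ν (Ev (V+1) \ Ev V) :=
            le_trans (measure_mono hsub2) (measure_union_le _ _)
        _ ≤ 2 * ∑ v ∈ Finset.range V, ν ((Ev (v+1) \ Ev v) ∩ T)
              + 2 * ν ((Ev (V+1) \ Ev V) ∩ T) := add_le_add ih (core V)
        _ = 2 * ∑ v ∈ Finset.range (V+1), ν ((Ev (v+1) \ Ev v) ∩ T) := by
            rw [Finset.sum_range_succ, mul_add]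
  have hdisjsum : ∑ v ∈ Finset.range (N : ℕ), ν ((Ev (v+1) \ Ev v) ∩ T) ≤ ν T := by
    have hdd : Set.PairwiseDisjoint (↑(Finset.range (N : ℕ)))
        (fun v => (Ev (v+1) \ Ev v) ∩ T) := by
      have key : ∀ v w : ℕ, v < w →
          Disjoint ((Ev (v+1) \ Ev v) ∩ T) ((Ev (w+1) \ Ev w) ∩ T) := by
        intro v w hvw
        have h1 : (Ev (v+1) \ Ev v) ∩ T ⊆ Ev w :=
          Set.inter_subset_left.trans (Set.diff_subset.trans (hmono _ _ hvw))
        have h2 : Disjoint (Ev w) ((Ev (w+1) \ Ev w) ∩ T) :=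
          (disjoint_sdiff_self_right).mono_right Set.inter_subset_left
        exact (h2.mono_left h1)
      intro v _ w _ hvw
      rcases lt_or_gt_of_ne hvw with h' | h'
      · exact key v w h'
      · exact (key w v h').symm
    rw [← measure_biUnion_finset hdd fun v _ => ((hEvm _).diff (hEvm _)).inter hTm]
    exact measure_mono (Set.iUnion₂_subset fun v _ => Set.inter_subset_right)
  have hEN : {z | t < finMax (Ck d N k) fun n => |Shat d θ h n z|} = Ev (N : ℕ) := by
    have hfi : ((Ck d N k).filter fun n => ((n l : ℕ)) ≤ (N : ℕ)) = Ck d N k := by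
      refine Finset.filter_true_of_mem fun n hn => ?_
      have hnN : n ≤ diag d N := (Finset.mem_Icc.mp (Finset.mem_filter.mp hn).1).2
      exact_mod_cast hnN l
    rw [hEv]
    simp only [hfi]
  rw [hEN]
  calc ν (Ev (N : ℕ)) ≤ 2 * ∑ v ∈ Finset.range (N : ℕ), ν ((Ev (v+1) \ Ev v) ∩ T) := htel _
    _ ≤ 2 * ν T := mul_le_mul_right hdisjsum 2

lemma levy_chain {E : Type*} [MeasurableSpace E] (d : ℕ) (θ : ℝ) (h : (Fin d → E) → ℝ)
    (hhm : Measurable h) (N : ℕ+) (t : ℝ) (ht : 0 < t)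
    (ν : Measure (((Fin d × ℕ+) → E) × ((Fin d × ℕ+) → ℝ)))
    (hν : ∀ (l : Fin d) (v : ℕ), ν.map (flipz d l v) = ν) :
    ν {z | t < finMax (Ck d N 0) fun n => |Shat d θ h n z|}
      ≤ 2 ^ d * ν {z | t < finMax (Ck d N d) fun n => |Shat d θ h n z|} := by
  have H : ∀ j, j ≤ d → ν {z | t < finMax (Ck d N 0) fun n => |Shat d θ h n z|}
      ≤ 2 ^ j * ν {z | t < finMax (Ck d N j) fun n => |Shat d θ h n z|} := by
    intro j
    induction j with
    | zero => intro _; simp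
    | succ j ih =>
      intro hj
      calc ν {z | t < finMax (Ck d N 0) fun n => |Shat d θ h n z|}
          ≤ 2 ^ j * ν {z | t < finMax (Ck d N j) fun n => |Shat d θ h n z|} :=
            ih (Nat.le_of_succ_le hj)
        _ ≤ 2 ^ j * (2 * ν {z | t < finMax (Ck d N (j+1)) fun n => |Shat d θ h n z|}) :=
            mul_le_mul_right (levy_step d θ h hhm N t ht ν hν j hj) _
        _ = 2 ^ (j+1) * ν {z | t < finMax (Ck d N (j+1)) fun n => |Shat d θ h n z|} := by
            rw [← mul_assoc, ← pow_succ]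
  exact H d le_rfl

open scoped Classical in
lemma rad_apply {Ω : Type*} [MeasurableSpace Ω] (μ : Measure Ω) [IsProbabilityMeasure μ]
    (f : Ω → ℝ) (hf : Measurable f) (h1 : μ {ω | f ω = 1} = 1/2) (h2 : μ {ω | f ω = -1} = 1/2)
    (B : Set ℝ) (hB : MeasurableSet B) :
    μ (f ⁻¹' B) = (if (1:ℝ) ∈ B then 1/2 else 0) + (if (-1:ℝ) ∈ B then 1/2 else 0) := by
  classical
  have hA1 : {ω | f ω = 1} = f ⁻¹' {(1:ℝ)} := rfl
  have hA2 : {ω | f ω = -1} = f ⁻¹' {(-1:ℝ)} := rfl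
  have hm1 : MeasurableSet (f ⁻¹' {(1:ℝ)}) := hf (measurableSet_singleton _)
  have hm2 : MeasurableSet (f ⁻¹' {(-1:ℝ)}) := hf (measurableSet_singleton _)
  have hdisj : Disjoint (f ⁻¹' {(1:ℝ)}) (f ⁻¹' {(-1:ℝ)}) := by
    rw [Set.disjoint_left]
    rintro ω h1' h2'
    simp only [Set.mem_preimage, Set.mem_singleton_iff] at h1' h2'
    rw [h1'] at h2'
    norm_num at h2'
  have hU : μ (f ⁻¹' {(1:ℝ)} ∪ f ⁻¹' {(-1:ℝ)}) = 1 := by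
    rw [measure_union hdisj hm2, ← hA1, ← hA2, h1, h2]
    rw [ENNReal.div_add_div_same, one_add_one_eq_two]
    exact ENNReal.div_self two_ne_zero ENNReal.ofNat_ne_top
  have hcompl : μ ((f ⁻¹' {(1:ℝ)} ∪ f ⁻¹' {(-1:ℝ)})ᶜ) = 0 := by
    rw [measure_compl (hm1.union hm2) (measure_ne_top _ _), hU, measure_univ, tsub_self]
  have key : μ (f ⁻¹' B) = μ (f ⁻¹' B ∩ f ⁻¹' {(1:ℝ)}) + μ (f ⁻¹' B ∩ f ⁻¹' {(-1:ℝ)}) := by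
    have h0 : μ (f ⁻¹' B) = μ (f ⁻¹' B ∩ (f ⁻¹' {(1:ℝ)} ∪ f ⁻¹' {(-1:ℝ)}))
        + μ (f ⁻¹' B \ (f ⁻¹' {(1:ℝ)} ∪ f ⁻¹' {(-1:ℝ)})) :=
      (measure_inter_add_diff _ (hm1.union hm2)).symm
    have h0' : μ (f ⁻¹' B \ (f ⁻¹' {(1:ℝ)} ∪ f ⁻¹' {(-1:ℝ)})) = 0 :=
      measure_mono_null (fun x hx => hx.2) hcompl
    rw [h0, h0', add_zero, Set.inter_union_distrib_left,
      measure_union (hdisj.mono Set.inter_subset_right Set.inter_subset_right)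
        ((hf hB).inter hm2)]
  have e1 : μ (f ⁻¹' B ∩ f ⁻¹' {(1:ℝ)}) = if (1:ℝ) ∈ B then 1/2 else 0 := by
    rw [← Set.preimage_inter]
    by_cases hb : (1:ℝ) ∈ B
    · rw [if_pos hb, Set.inter_eq_right.mpr (Set.singleton_subset_iff.mpr hb), ← hA1, h1]
    · rw [if_neg hb, Set.inter_singleton_eq_empty.mpr hb, Set.preimage_empty, measure_empty]
  have e2 : μ (f ⁻¹' B ∩ f ⁻¹' {(-1:ℝ)}) = if (-1:ℝ) ∈ B then 1/2 else 0 := by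
    rw [← Set.preimage_inter]
    by_cases hb : (-1:ℝ) ∈ B
    · rw [if_pos hb, Set.inter_eq_right.mpr (Set.singleton_subset_iff.mpr hb), ← hA2, h2]
    · rw [if_neg hb, Set.inter_singleton_eq_empty.mpr hb, Set.preimage_empty, measure_empty]
  rw [key, e1, e2]

lemma rad_map_flip {Ω : Type*} [MeasurableSpace Ω] (μ : Measure Ω) [IsProbabilityMeasure μ]
    (f : Ω → ℝ) (hf : Measurable f) (h1 : μ {ω | f ω = 1} = 1/2) (h2 : μ {ω | f ω = -1} = 1/2)
    (c : ℝ) (hc : c = 1 ∨ c = -1) :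
    μ.map (fun ω => c * f ω) = μ.map f := by
  rcases hc with rfl | rfl
  · simp only [one_mul]
  · classical
    refine Measure.ext fun B hB => ?_
    rw [Measure.map_apply (hf.const_mul _) hB, Measure.map_apply hf hB]
    have hset : (fun ω => (-1:ℝ) * f ω) ⁻¹' B = f ⁻¹' ((fun x : ℝ => -x) ⁻¹' B) := by
      ext ω
      simp [neg_mul, one_mul]
    have hBm : MeasurableSet ((fun x : ℝ => -x) ⁻¹' B) := measurable_neg hB
    rw [hset, rad_apply μ f hf h1 h2 _ hBm, rad_apply μ f hf h1 h2 _ hB]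
    have hmem1 : (1:ℝ) ∈ (fun x : ℝ => -x) ⁻¹' B ↔ (-1:ℝ) ∈ B := by
      simp [Set.mem_preimage]
    have hmem2 : (-1:ℝ) ∈ (fun x : ℝ => -x) ⁻¹' B ↔ (1:ℝ) ∈ B := by
      simp [Set.mem_preimage]
    rw [if_congr hmem1 rfl rfl, if_congr hmem2 rfl rfl, add_comm]

lemma eps_map_flip {Ω ι : Type*} [MeasurableSpace Ω]
    (μ : Measure Ω) [IsProbabilityMeasure μ]
    (e : ι → Ω → ℝ) (hem : ∀ p, Measurable (e p))
    (heind : iIndepFun e μ)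
    (hRad : ∀ p, μ {ω | e p ω = 1} = 1/2 ∧ μ {ω | e p ω = -1} = 1/2)
    (c : ι → ℝ) (hc : ∀ p, c p = 1 ∨ c p = -1) :
    μ.map (fun ω (p : ι) => c p * e p ω) = μ.map (fun ω (p : ι) => e p ω) := by
  classical
  have hcem : ∀ p, Measurable (fun ω => c p * e p ω) := fun p => (hem p).const_mul _
  have hcef : Measurable (fun ω (p : ι) => c p * e p ω) := measurable_pi_lambda _ hcem
  have hef : Measurable (fun ω (p : ι) => e p ω) := measurable_pi_lambda _ hem
  have hceind : iIndepFun (fun p ω => c p * e p ω) μ :=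
    heind.comp (fun p x => c p * x) (fun p => measurable_id.const_mul _)
  have hmarg : ∀ p, μ.map (fun ω => c p * e p ω) = μ.map (e p) :=
    fun p => rad_map_flip μ (e p) (hem p) (hRad p).1 (hRad p).2 (c p) (hc p)
  haveI : IsProbabilityMeasure (μ.map (fun ω (p : ι) => c p * e p ω)) :=
    Measure.isProbabilityMeasure_map hcef.aemeasurable
  haveI : IsProbabilityMeasure (μ.map (fun ω (p : ι) => e p ω)) :=
    Measure.isProbabilityMeasure_map hef.aemeasurable
  refine ext_of_generate_finite
    (squareCylinders fun _ : ι => {s : Set ℝ | MeasurableSet s})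
    generateFrom_squareCylinders.symm
    (isPiSystem_squareCylinders (fun _ => MeasurableSpace.isPiSystem_measurableSet)
      (fun _ => (MeasurableSet.univ : MeasurableSet (Set.univ : Set ℝ))))
    ?_ (by simp)
  rintro S ⟨s, tset, htm, rfl⟩
  simp only [Set.mem_univ_pi, Set.mem_setOf_eq] at htm
  have hSm : MeasurableSet ((s : Set ι).pi tset) :=
    MeasurableSet.pi (Finset.countable_toSet s) (fun p _ => htm p)
  have hpre : ∀ (F : ι → Ω → ℝ),
      (fun ω (p : ι) => F p ω) ⁻¹' ((s : Set ι).pi tset) = ⋂ p ∈ s, F p ⁻¹' tset p := by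
    intro F; ext ω; simp [Set.mem_pi]
  rw [Measure.map_apply hcef hSm, Measure.map_apply hef hSm, hpre, hpre,
    hceind.measure_inter_preimage_eq_mul s (fun p _ => htm p),
    heind.measure_inter_preimage_eq_mul s (fun p _ => htm p)]
  refine Finset.prod_congr rfl fun p _ => ?_
  rw [← Measure.map_apply (hcem p) (htm p), ← Measure.map_apply (hem p) (htm p), hmarg p]

lemma flip_map_eq {E Ω ι : Type*} [MeasurableSpace E] [MeasurableSpace Ω]
    (μ : Measure Ω) [IsProbabilityMeasure μ]
    (X : ι → Ω → E) (hXm : ∀ p, Measurable (X p))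
    (e : ι → Ω → ℝ) (hem : ∀ p, Measurable (e p))
    (heind : iIndepFun e μ)
    (hRad : ∀ p, μ {ω | e p ω = 1} = 1/2 ∧ μ {ω | e p ω = -1} = 1/2)
    (hXe : IndepFun (fun ω (p : ι) => X p ω) (fun ω (p : ι) => e p ω) μ)
    (c : ι → ℝ) (hc : ∀ p, c p = 1 ∨ c p = -1) :
    μ.map (fun ω => ((fun p => X p ω : ι → E), (fun p => c p * e p ω : ι → ℝ)))
      = μ.map (fun ω => ((fun p => X p ω : ι → E), (fun p => e p ω : ι → ℝ))) := by
  have hXf : Measurable (fun ω (p : ι) => X p ω) := measurable_pi_lambda _ hXm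
  have hef : Measurable (fun ω (p : ι) => e p ω) := measurable_pi_lambda _ hem
  have hcef : Measurable (fun ω (p : ι) => c p * e p ω) :=
    measurable_pi_lambda _ fun p => (hem p).const_mul _
  have hflipm : Measurable (fun (g : ι → ℝ) (p : ι) => c p * g p) :=
    measurable_pi_lambda _ fun p => (measurable_pi_apply p).const_mul _
  have hXe' : IndepFun (fun ω (p : ι) => X p ω) (fun ω (p : ι) => c p * e p ω) μ :=
    hXe.comp measurable_id hflipm
  rw [(indepFun_iff_map_prod_eq_prod_map_map hXf.aemeasurable hcef.aemeasurable).mp hXe',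
    (indepFun_iff_map_prod_eq_prod_map_map hXf.aemeasurable hef.aemeasurable).mp hXe,
    eps_map_flip μ e hem heind hRad c hc]

lemma Ck_zero (d : ℕ) (θ : ℝ) (N : ℕ+) : secIdxAll d θ (diag d N) ⊆ Ck d N 0 := by
  classical
  intro n hn
  refine Finset.mem_filter.mpr ⟨Finset.mem_of_mem_filter _ hn, fun l hl => absurd hl (Nat.not_lt_zero _)⟩

lemma Ck_last (d : ℕ) (N : ℕ+) : Ck d N d = {diag d N} := by
  classical
  ext n
  simp only [Ck, Finset.mem_filter, Finset.mem_Icc, Finset.mem_singleton]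
  constructor
  · rintro ⟨-, hn⟩
    funext l
    exact hn l l.isLt
  · rintro rfl
    exact ⟨⟨fun j => N.one_le, fun j => le_rfl⟩, fun l _ => rfl⟩

/-- Lévy-type maximal inequality for decoupled sectorial sums. -/
theorem levy_maximal_dec_sectorial
{E Ω : Type*} [MeasurableSpace E] [MeasurableSpace Ω]
    (μ : Measure Ω) [IsProbabilityMeasure μ]
    (d : ℕ) (hd : 1 ≤ d) (θ : ℝ) (hθ0 : 0 < θ) (hθ1 : θ < 1)
(Xd : Fin d → ℕ+ → Ω → E) (hXdm : ∀ l i, Measurable (Xd l i))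
    (hXdind : iIndepFun (fun p : Fin d × ℕ+ => Xd p.1 p.2) μ)
    (hXdid : ∀ (l : Fin d) (i : ℕ+) (l' : Fin d) (i' : ℕ+),
      IdentDistrib (Xd l i) (Xd l' i') μ μ)
    (ed : Fin d → ℕ+ → Ω → ℝ) (hedm : ∀ l i, Measurable (ed l i))
    (hedind : iIndepFun (fun p : Fin d × ℕ+ => ed p.1 p.2) μ)
    (hedRad : ∀ (l : Fin d) (i : ℕ+),
      μ {ω | ed l i ω = 1} = 1/2 ∧ μ {ω | ed l i ω = -1} = 1/2)
    (hXded : IndepFun (fun ω (p : Fin d × ℕ+) => Xd p.1 p.2 ω)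
      (fun ω (p : Fin d × ℕ+) => ed p.1 p.2 ω) μ)
(h : (Fin d → E) → ℝ) (hhm : Measurable h)
    (hsym : ∀ (σ : Equiv.Perm (Fin d)) (x : Fin d → E), h (x ∘ σ) = h x)
    (N : ℕ+) (t : ℝ) (ht : 0 < t) :
    μ {ω | t < finMax (secIdxAll d θ (diag d N))
        (fun n => |∑ i ∈ secIdxAll d θ n, (∏ l, ed l (i l) ω) * h fun l => Xd l (i l) ω|)}
      ≤ 2 ^ d *
        μ {ω | t < |∑ i ∈ secIdxAll d θ (diag d N),
          (∏ l, ed l (i l) ω) * h fun l => Xd l (i l) ω|} := by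
  classical
  set G : Ω → ((Fin d × ℕ+) → E) × ((Fin d × ℕ+) → ℝ) :=
    fun ω => (fun p => Xd p.1 p.2 ω, fun p => ed p.1 p.2 ω) with hG
  have hGm : Measurable G :=
    (measurable_pi_lambda _ fun p : Fin d × ℕ+ => hXdm p.1 p.2).prodMk
      (measurable_pi_lambda _ fun p : Fin d × ℕ+ => hedm p.1 p.2)
  set ν := μ.map G with hν0
  have hν : ∀ (l : Fin d) (v : ℕ), ν.map (flipz d l v) = ν := by
    intro l v
    rw [hν0, Measure.map_map (flipz_meas d l v) hGm]
    have hcomp : flipz (E := E) d l v ∘ G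
        = fun ω => ((fun p : Fin d × ℕ+ => Xd p.1 p.2 ω),
            fun p : Fin d × ℕ+ => flipc d l v p * ed p.1 p.2 ω) := rfl
    rw [hcomp]
    exact flip_map_eq μ (fun p => Xd p.1 p.2) (fun p => hXdm p.1 p.2)
      (fun p => ed p.1 p.2) (fun p => hedm p.1 p.2) hedind (fun p => hedRad p.1 p.2)
      hXded (flipc d l v) (fun p => by unfold flipc; split <;> simp)
  have step1 : μ {ω | t < finMax (secIdxAll d θ (diag d N))
        (fun n => |∑ i ∈ secIdxAll d θ n, (∏ l, ed l (i l) ω) * h fun l => Xd l (i l) ω|)}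
      ≤ ν {z | t < finMax (Ck d N 0) fun n => |Shat d θ h n z|} := by
    rw [hν0, Measure.map_apply hGm (meas_lt_finMax d θ h hhm t _)]
    refine measure_mono fun ω hω => ?_
    simp only [Set.mem_setOf_eq, Set.mem_preimage] at *
    refine lt_of_lt_of_le ?_ (finMax_mono (Ck_zero d θ N) _)
    exact hω
  have step2 := levy_chain d θ h hhm N t ht ν hν
  have step3 : ν {z | t < finMax (Ck d N d) fun n => |Shat d θ h n z|}
      = μ {ω | t < |∑ i ∈ secIdxAll d θ (diag d N),
          (∏ l, ed l (i l) ω) * h fun l => Xd l (i l) ω|} := by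
    have hset : {z : ((Fin d × ℕ+) → E) × ((Fin d × ℕ+) → ℝ) |
        t < finMax (Ck d N d) fun n => |Shat d θ h n z|}
        = {z | t < |Shat d θ h (diag d N) z|} := by
      ext z
      rw [Set.mem_setOf_eq, Set.mem_setOf_eq, Ck_last d N, finMax, Finset.fold_singleton]
      constructor
      · intro h'
        rcases lt_max_iff.mp h' with h'' | h''
        · exact h''
        · linarith
      · intro h'
        exact lt_max_iff.mpr (Or.inl h')
    rw [hν0, hset, Measure.map_apply hGm
      (measurableSet_lt measurable_const (shat_meas d θ h hhm _).abs)]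
    rfl
  calc μ {ω | t < finMax (secIdxAll d θ (diag d N))
        (fun n => |∑ i ∈ secIdxAll d θ n, (∏ l, ed l (i l) ω) * h fun l => Xd l (i l) ω|)}
      ≤ ν {z | t < finMax (Ck d N 0) fun n => |Shat d θ h n z|} := step1
    _ ≤ 2 ^ d * ν {z | t < finMax (Ck d N d) fun n => |Shat d θ h n z|} := step2
    _ = 2 ^ d * μ {ω | t < |∑ i ∈ secIdxAll d θ (diag d N),
          (∏ l, ed l (i l) ω) * h fun l => Xd l (i l) ω|} := by rw [step3]
end
end
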